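/- arXiv:2411.10792 — 2 statements merged into one kernel-verified Lean document; each statement's English description precedes it below -/
import Mathlib

section
/- Let B and C be finite open partial affine planes whose intersection A = B ∩ C is a common substructure (the incidence and parallelism relations of B and C agree on A), with A ≤_o B and A ≤_o C. Then there exist a finite open partial affine plane D and embeddings f : B → D and g : C → D with f↾A = g↾A such that f(B) ≤_o D and g(C) ≤_o D. In particular, the class of finite open partial affine planes with the relation ≤_o has the amalgamation and joint embedding properties. -/
namespace Affine

variable {P L : Type}

/-- The lines of `X` incident with the point `p`. -/
def linesThru (I : P → L → Prop) (X : Set (P ⊕ L)) (p : P) : Set L :=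
  {l : L | Sum.inr l ∈ X ∧ I p l}

/-- The points of `X` incident with the line `l`. -/
def pointsOn (I : P → L → Prop) (X : Set (P ⊕ L)) (l : L) : Set P :=
  {p : P | Sum.inl p ∈ X ∧ I p l}

/-- An element is hyperfree in `X` if it is a point incident with at most two lines of `X`,
or a line incident with at most one point of `X`, or a line incident with exactly two points
of `X` and parallel to no other line of `X`. -/
def Hyperfree (I : P → L → Prop) (Par : L → L → Prop) (X : Set (P ⊕ L)) :
    (P ⊕ L) → Prop
  | Sum.inl p => (linesThru I X p).encard ≤ 2
  | Sum.inr l => (pointsOn I X l).encard ≤ 1 ∨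
      ((pointsOn I X l).encard = 2 ∧
        ∀ l' : L, Sum.inr l' ∈ X → l' ≠ l → ¬ Par l l')

/-- `B` is open over `A`. -/
def OpenOver (I : P → L → Prop) (Par : L → L → Prop) (A B : Set (P ⊕ L)) : Prop :=
  ∀ C : Set (P ⊕ L), C ⊆ B \ A → C.Finite → C.Nonempty →
    ∃ c ∈ C, Hyperfree I Par (A ∪ C) c

/-- `B` is open. -/
def IsOpen (I : P → L → Prop) (Par : L → L → Prop) (B : Set (P ⊕ L)) : Prop :=
  ∀ C : Set (P ⊕ L), C ⊆ B → C.Finite → C.Nonempty →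
    ∃ c ∈ C, Hyperfree I Par C c

/-- `X` is a partial affine plane: parallelism is an equivalence relation on lines of `X`;
two distinct points of `X` are incident with at most one common line of `X`; two non-parallel
lines of `X` are incident with at most one common point of `X`; for every point of `X` and
every line of `X` there is at most one line of `X` incident with the point and parallel to
the line. -/
def IsPartialAffine (I : P → L → Prop) (Par : L → L → Prop) (X : Set (P ⊕ L)) : Prop :=
  (∀ l : L, Sum.inr l ∈ X → Par l l) ∧
  (∀ l l' : L, Sum.inr l ∈ X → Sum.inr l' ∈ X → Par l l' → Par l' l) ∧
  (∀ l l' l'' : L, Sum.inr l ∈ X → Sum.inr l' ∈ X → Sum.inr l'' ∈ X →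
    Par l l' → Par l' l'' → Par l l'') ∧
  (∀ p q : P, p ≠ q → Sum.inl p ∈ X → Sum.inl q ∈ X →
    ∀ l l' : L, Sum.inr l ∈ X → Sum.inr l' ∈ X →
      I p l → I q l → I p l' → I q l' → l = l') ∧
  (∀ l l' : L, ¬ Par l l' → Sum.inr l ∈ X → Sum.inr l' ∈ X →
    ∀ p q : P, Sum.inl p ∈ X → Sum.inl q ∈ X →
      I p l → I p l' → I q l → I q l' → p = q) ∧
  (∀ p : P, Sum.inl p ∈ X → ∀ l : L, Sum.inr l ∈ X →
    ∀ l' l'' : L, Sum.inr l' ∈ X → Sum.inr l'' ∈ X →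
      I p l' → Par l' l → I p l'' → Par l'' l → l' = l'')

end Affine

open Affine

/-!
The amalgam is grown from a copy of `C` inside types with room for fresh elements. Since
`A ≤_o B`, the elements of `B \ A` can be removed one at a time, each hyperfree in what remains;
they are added back in the reverse order, extending the embedding of `A` one element at a time.
A new point lies on at most two lines: if some point already lies on the images of both it must
be identified with that point, otherwise a fresh point is adjoined. A new line with two points,
or with a point and a parallel, is likewise identified with an existing line when the axioms
force it, and otherwise adjoined fresh in the parallel class dictated by `B`. In every case the
hyperfreeness of the new element is what keeps the plane open and both images `≤_o` in it.
-/

namespace Affine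

variable {P L P' L' : Type}

section Basic

variable {I : P → L → Prop} {Par : L → L → Prop} {X Y : Set (P ⊕ L)}

lemma eq_or_eq_of_encard_le_two {α : Type*} {s : Set α} (hs : s.encard ≤ 2) {a b c : α}
    (ha : a ∈ s) (hb : b ∈ s) (hc : c ∈ s) (hab : a ≠ b) : c = a ∨ c = b := by
  by_contra! h
  have h3 : ({c, a, b} : Set α).encard = 3 := by
    rw [Set.encard_insert_of_notMem (by simp [h.1, h.2]), Set.encard_pair hab]; rfl
  have := (h3.symm.trans_le (Set.encard_le_encard (by grind))).trans hs
  norm_num at this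

lemma IsPartialAffine.par_refl (h : IsPartialAffine I Par X) {l : L} (hl : Sum.inr l ∈ X) :
    Par l l :=
  h.1 l hl

lemma IsPartialAffine.par_symm (h : IsPartialAffine I Par X) {l l' : L}
    (hl : Sum.inr l ∈ X) (hl' : Sum.inr l' ∈ X) (hp : Par l l') : Par l' l :=
  h.2.1 l l' hl hl' hp

lemma IsPartialAffine.par_trans (h : IsPartialAffine I Par X) {l l' l'' : L}
    (hl : Sum.inr l ∈ X) (hl' : Sum.inr l' ∈ X) (hl'' : Sum.inr l'' ∈ X)
    (h₁ : Par l l') (h₂ : Par l' l'') : Par l l'' :=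
  h.2.2.1 l l' l'' hl hl' hl'' h₁ h₂

lemma IsPartialAffine.par_congr_left (h : IsPartialAffine I Par X) {l l' l'' : L}
    (hl : Sum.inr l ∈ X) (hl' : Sum.inr l' ∈ X) (hl'' : Sum.inr l'' ∈ X) (hp : Par l l') :
    Par l l'' ↔ Par l' l'' :=
  ⟨h.par_trans hl' hl hl'' (h.par_symm hl hl' hp), h.par_trans hl hl' hl'' hp⟩

lemma IsPartialAffine.eq_of_inc_inc (h : IsPartialAffine I Par X) {p q : P} {l l' : L}
    (hpq : p ≠ q) (hp : Sum.inl p ∈ X) (hq : Sum.inl q ∈ X) (hl : Sum.inr l ∈ X)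
    (hl' : Sum.inr l' ∈ X) (hpl : I p l) (hql : I q l) (hpl' : I p l') (hql' : I q l') :
    l = l' :=
  h.2.2.2.1 p q hpq hp hq l l' hl hl' hpl hql hpl' hql'

lemma IsPartialAffine.par_of_inc_inc (h : IsPartialAffine I Par X) {p q : P} {l l' : L}
    (hpq : p ≠ q) (hp : Sum.inl p ∈ X) (hq : Sum.inl q ∈ X) (hl : Sum.inr l ∈ X)
    (hl' : Sum.inr l' ∈ X) (hpl : I p l) (hpl' : I p l') (hql : I q l) (hql' : I q l') :
    Par l l' := by
  by_contra hnp
  exact hpq (h.2.2.2.2.1 l l' hnp hl hl' p q hp hq hpl hpl' hql hql')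

lemma IsPartialAffine.eq_of_par_of_inc (h : IsPartialAffine I Par X) {p : P} {l l' l'' : L}
    (hp : Sum.inl p ∈ X) (hl : Sum.inr l ∈ X) (hl' : Sum.inr l' ∈ X) (hl'' : Sum.inr l'' ∈ X)
    (h₁ : I p l') (h₂ : Par l' l) (h₃ : I p l'') (h₄ : Par l'' l) : l' = l'' :=
  h.2.2.2.2.2 p hp l hl l' l'' hl' hl'' h₁ h₂ h₃ h₄

lemma IsPartialAffine.mono (h : IsPartialAffine I Par X) (hYX : Y ⊆ X) :
    IsPartialAffine I Par Y :=
  ⟨fun _ hl => h.par_refl (hYX hl), fun _ _ hl hl' => h.par_symm (hYX hl) (hYX hl'),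
    fun _ _ _ hl hl' hl'' => h.par_trans (hYX hl) (hYX hl') (hYX hl''),
    fun _ _ hpq hp hq _ _ hl hl' => h.eq_of_inc_inc hpq (hYX hp) (hYX hq) (hYX hl) (hYX hl'),
    fun _ _ hnp hl hl' _ _ hp hq h₁ h₂ h₃ h₄ => by
      by_contra hpq
      exact hnp (h.par_of_inc_inc hpq (hYX hp) (hYX hq) (hYX hl) (hYX hl') h₁ h₂ h₃ h₄),
    fun _ hp _ hl _ _ hl' hl'' => h.eq_of_par_of_inc (hYX hp) (hYX hl) (hYX hl') (hYX hl'')⟩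

lemma hyperfree_inl {p : P} :
    Hyperfree I Par X (Sum.inl p) ↔ (linesThru I X p).encard ≤ 2 := Iff.rfl

lemma hyperfree_inr {l : L} :
    Hyperfree I Par X (Sum.inr l) ↔ (pointsOn I X l).encard ≤ 1 ∨
      ((pointsOn I X l).encard = 2 ∧ ∀ l' : L, Sum.inr l' ∈ X → l' ≠ l → ¬ Par l l') :=
  Iff.rfl

lemma linesThru_mono (h : X ⊆ Y) (p : P) : linesThru I X p ⊆ linesThru I Y p :=
  fun _ hl => ⟨h hl.1, hl.2⟩

lemma pointsOn_mono (h : X ⊆ Y) (l : L) : pointsOn I X l ⊆ pointsOn I Y l :=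
  fun _ hp => ⟨h hp.1, hp.2⟩

lemma Hyperfree.pointsOn_encard_le_two {l : L} (h : Hyperfree I Par X (Sum.inr l)) :
    (pointsOn I X l).encard ≤ 2 := by
  rcases h with h | h
  · exact h.trans (by norm_num)
  · exact h.1.le

lemma Hyperfree.not_par {l l' : L} (h : Hyperfree I Par X (Sum.inr l)) {p q : P}
    (hp : p ∈ pointsOn I X l) (hq : q ∈ pointsOn I X l) (hpq : p ≠ q)
    (hl' : Sum.inr l' ∈ X) (hne : l' ≠ l) : ¬ Par l l' := by
  rcases h with h | h
  · exact absurd (Set.encard_le_one_iff.mp h p q hp hq) hpq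
  · exact h.2 l' hl' hne

lemma Hyperfree.encard_pointsOn_le_one_of_par {l l' : L} (h : Hyperfree I Par X (Sum.inr l))
    (hl' : Sum.inr l' ∈ X) (hne : l' ≠ l) (hpar : Par l l') : (pointsOn I X l).encard ≤ 1 :=
  h.elim id fun h2 => absurd hpar (h2.2 l' hl' hne)

lemma Hyperfree.anti (hXY : X ⊆ Y) {x : P ⊕ L} (h : Hyperfree I Par Y x) :
    Hyperfree I Par X x := by
  rcases x with p | l
  · exact (Set.encard_le_encard (linesThru_mono hXY p)).trans h
  · have hle := Set.encard_le_encard (pointsOn_mono (I := I) hXY l)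
    rcases h with h | ⟨h2, hpar⟩
    · exact Or.inl (hle.trans h)
    · rcases (hle.trans h2.le).lt_or_eq with h1 | h2'
      · exact Or.inl (Order.le_of_lt_add_one h1)
      · exact Or.inr ⟨h2', fun l' hl' => hpar l' (hXY hl')⟩

end Basic

section Open

variable {I I' I'' : P → L → Prop} {Par Par' Par'' : L → L → Prop} {X Y Z : Set (P ⊕ L)}

structure AgreeOn (I : P → L → Prop) (Par : L → L → Prop) (I' : P → L → Prop)
    (Par' : L → L → Prop) (X : Set (P ⊕ L)) : Prop where
  incid_iff : ∀ p l, Sum.inl p ∈ X → Sum.inr l ∈ X → (I' p l ↔ I p l)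
  par_iff : ∀ l l', Sum.inr l ∈ X → Sum.inr l' ∈ X → (Par' l l' ↔ Par l l')

lemma AgreeOn.refl : AgreeOn I Par I Par X := ⟨fun _ _ _ _ => Iff.rfl, fun _ _ _ _ => Iff.rfl⟩

lemma AgreeOn.mono (h : AgreeOn I Par I' Par' Y) (hXY : X ⊆ Y) : AgreeOn I Par I' Par' X :=
  ⟨fun p l hp hl => h.incid_iff p l (hXY hp) (hXY hl),
    fun l l' hl hl' => h.par_iff l l' (hXY hl) (hXY hl')⟩

lemma AgreeOn.trans (h : AgreeOn I Par I' Par' X) (h' : AgreeOn I' Par' I'' Par'' X) :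
    AgreeOn I Par I'' Par'' X :=
  ⟨fun p l hp hl => (h'.incid_iff p l hp hl).trans (h.incid_iff p l hp hl),
    fun l l' hl hl' => (h'.par_iff l l' hl hl').trans (h.par_iff l l' hl hl')⟩

lemma Hyperfree.of_agreeOn (h : AgreeOn I Par I' Par' X) {x : P ⊕ L} (hx : x ∈ X)
    (hfree : Hyperfree I Par X x) : Hyperfree I' Par' X x := by
  rcases x with p | l
  · have : linesThru I' X p = linesThru I X p := by
      ext l; exact and_congr_right fun hl => h.incid_iff p l hx hl
    rwa [hyperfree_inl, this]
  · have : pointsOn I' X l = pointsOn I X l := by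
      ext p; exact and_congr_right fun hp => h.incid_iff p l hp hx
    rw [hyperfree_inr, this]
    exact hfree.imp_right fun h2 =>
      ⟨h2.1, fun l' hl' hne hpar => h2.2 l' hl' hne ((h.par_iff l l' hx hl').mp hpar)⟩

lemma OpenOver.of_agreeOn (h : AgreeOn I Par I' Par' Y) (hXY : X ⊆ Y)
    (hopen : OpenOver I Par X Y) : OpenOver I' Par' X Y := by
  intro S hS hSfin hSne
  obtain ⟨c, hc, hfree⟩ := hopen S hS hSfin hSne
  have hsub : X ∪ S ⊆ Y := Set.union_subset hXY fun x hx => (hS hx).1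
  exact ⟨c, hc, hfree.of_agreeOn (h.mono hsub) (Or.inr hc)⟩

lemma isOpen_iff_openOver_empty : IsOpen I Par X ↔ OpenOver I Par ∅ X := by
  simp only [IsOpen, OpenOver, Set.sdiff_empty, Set.empty_union]

lemma OpenOver.mono (h : OpenOver I Par X Y) (hZY : Z ⊆ Y) : OpenOver I Par X Z :=
  fun S hS => h S fun _ hx => ⟨hZY (hS hx).1, (hS hx).2⟩

lemma OpenOver.trans (hXY : X ⊆ Y) (h₁ : OpenOver I Par X Y) (h₂ : OpenOver I Par Y Z) :
    OpenOver I Par X Z := by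
  intro S hS hSfin hSne
  by_cases hSY : S ⊆ Y
  · exact h₁ S (fun x hx => ⟨hSY hx, (hS hx).2⟩) hSfin hSne
  · obtain ⟨c, hc, hfree⟩ := h₂ (S \ Y) (fun x hx => ⟨(hS hx.1).1, hx.2⟩) hSfin.sdiff
      (Set.sdiff_nonempty.mpr hSY)
    refine ⟨c, hc.1, hfree.anti ?_⟩
    rintro x (hx | hx)
    · exact Or.inl (hXY hx)
    · by_cases hxY : x ∈ Y
      · exact Or.inl hxY
      · exact Or.inr ⟨hx, hxY⟩

lemma openOver_insert_of_hyperfree {x : P ⊕ L} (hfree : Hyperfree I Par (insert x X) x) :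
    OpenOver I Par X (insert x X) := by
  intro S hS _ ⟨c, hc⟩
  have hSx : ∀ y ∈ S, y = x := fun y hy => ((hS hy).1).resolve_right (hS hy).2
  obtain rfl := hSx c hc
  refine ⟨c, hc, hfree.anti ?_⟩
  rintro y (hy | hy)
  · exact Or.inr hy
  · exact Or.inl (hSx y hy)

/-- To enlarge the base of an open extension by one element `d`, apply openness over the old
base twice: once to `insert d S` and, if `d` is the hyperfree witness, once more to `S`. -/
lemma OpenOver.insert_left (h : OpenOver I Par X Y) {d : P ⊕ L} (hd : d ∈ Y) (hdX : d ∉ X)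
    (H : ∀ S : Set (P ⊕ L), S ⊆ Y \ insert d X → ∀ e ∈ S, Hyperfree I Par (X ∪ S) e →
      Hyperfree I Par (insert d (X ∪ S)) d → Hyperfree I Par (insert d (X ∪ S)) e) :
    OpenOver I Par (insert d X) Y := by
  intro S hS hSfin hSne
  have hS' : S ⊆ Y \ X := fun x hx => ⟨(hS hx).1, fun hxX => (hS hx).2 (Or.inr hxX)⟩
  obtain ⟨e, he, hfree⟩ := h (insert d S) (Set.insert_subset ⟨hd, hdX⟩ hS') (hSfin.insert d)
    (Set.insert_nonempty d S)
  rw [Set.union_insert] at hfree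
  rw [Set.insert_union]
  rcases he with rfl | he
  · obtain ⟨e', he', hfree'⟩ := h S hS' hSfin hSne
    exact ⟨e', he', H S hS e' he' hfree' hfree⟩
  · exact ⟨e, he, hfree⟩

lemma Hyperfree.insert_inl {e : P ⊕ L} (h : Hyperfree I Par X e) {x : P}
    (hx : ∀ l, e = Sum.inr l → ¬ I x l) : Hyperfree I Par (insert (Sum.inl x) X) e := by
  rcases e with p | l
  · have : linesThru I (insert (Sum.inl x) X) p = linesThru I X p := by
      ext l; simp [linesThru]
    rwa [hyperfree_inl, this]
  · have : pointsOn I (insert (Sum.inl x) X) l = pointsOn I X l := by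
      ext p
      simp only [pointsOn, Set.mem_insert_iff, Sum.inl.injEq, Set.mem_ofPred_eq]
      exact ⟨fun ⟨h1, h2⟩ => ⟨h1.resolve_left fun hpx => hx l rfl (hpx ▸ h2), h2⟩,
        fun ⟨h1, h2⟩ => ⟨Or.inr h1, h2⟩⟩
    rw [hyperfree_inr, this]
    exact h.imp_right fun h2 => ⟨h2.1, fun l' hl' => h2.2 l' (by simpa using hl')⟩

lemma Hyperfree.insert_inr {e : P ⊕ L} (h : Hyperfree I Par X e) {y : L}
    (hinc : ∀ p, e = Sum.inl p → ¬ I p y)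
    (hpar : ∀ l, e = Sum.inr l → l ≠ y → Par l y → (pointsOn I X l).encard ≤ 1) :
    Hyperfree I Par (insert (Sum.inr y) X) e := by
  rcases e with p | l
  · have : linesThru I (insert (Sum.inr y) X) p = linesThru I X p := by
      ext l
      simp only [linesThru, Set.mem_insert_iff, Sum.inr.injEq, Set.mem_ofPred_eq]
      exact ⟨fun ⟨h1, h2⟩ => ⟨h1.resolve_left fun hly => hinc p rfl (hly ▸ h2), h2⟩,
        fun ⟨h1, h2⟩ => ⟨Or.inr h1, h2⟩⟩
    rwa [hyperfree_inl, this]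
  · have : pointsOn I (insert (Sum.inr y) X) l = pointsOn I X l := by
      ext p; simp [pointsOn]
    rw [hyperfree_inr, this]
    rcases h with h | h
    · exact Or.inl h
    by_cases hly : l ≠ y ∧ Par l y
    · exact Or.inl (hpar l rfl hly.1 hly.2)
    refine Or.inr ⟨h.1, fun l' hl' hne hll' => ?_⟩
    rcases hl' with hl' | hl'
    · obtain rfl := Sum.inr_injective hl'
      exact hly ⟨hne.symm, hll'⟩
    · exact h.2 l' hl' hne hll'

end Open

section Embedding

lemma mem_image_map_inl {u : P → P'} {v : L → L'} {X : Set (P ⊕ L)} {a : P'} :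
    Sum.inl a ∈ Sum.map u v '' X ↔ ∃ p, Sum.inl p ∈ X ∧ u p = a := by
  constructor
  · rintro ⟨p | l, hx, h⟩
    · exact ⟨p, hx, Sum.inl_injective h⟩
    · simp at h
  · rintro ⟨p, hp, rfl⟩
    exact ⟨Sum.inl p, hp, rfl⟩

lemma mem_image_map_inr {u : P → P'} {v : L → L'} {X : Set (P ⊕ L)} {a : L'} :
    Sum.inr a ∈ Sum.map u v '' X ↔ ∃ l, Sum.inr l ∈ X ∧ v l = a := by
  constructor
  · rintro ⟨p | l, hx, h⟩
    · simp at h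
    · exact ⟨l, hx, Sum.inr_injective h⟩
  · rintro ⟨l, hl, rfl⟩
    exact ⟨Sum.inr l, hl, rfl⟩

lemma image_eq_insert_of_eqOn {α β : Type*} {φ ψ : α → β} {s : Set α} {a : α} (ha : a ∈ s)
    (h : Set.EqOn φ ψ (s \ {a})) : φ '' s = insert (φ a) (ψ '' (s \ {a})) := by
  conv_lhs => rw [← Set.insert_sdiff_self_of_mem ha]
  rw [Set.image_insert_eq, h.image_eq]

lemma eqOn_map_update_inl [DecidableEq P] (fp : P → P') (fl : L → L') (q : P) (x : P')
    (X : Set (P ⊕ L)) :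
    Set.EqOn (Sum.map (Function.update fp q x) fl) (Sum.map fp fl) (X \ {Sum.inl q}) := by
  rintro (p | l) ⟨-, hz⟩
  · simp [Function.update_of_ne (fun h => hz (h ▸ rfl) : p ≠ q)]
  · rfl

lemma eqOn_map_update_inr [DecidableEq L] (fp : P → P') (fl : L → L') (m : L) (y : L')
    (X : Set (P ⊕ L)) :
    Set.EqOn (Sum.map fp (Function.update fl m y)) (Sum.map fp fl) (X \ {Sum.inr m}) := by
  rintro (p | l) ⟨-, hz⟩
  · rfl
  · simp [Function.update_of_ne (fun h => hz (h ▸ rfl) : l ≠ m)]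

structure IsEmbedding (I : P → L → Prop) (Par : L → L → Prop) (X : Set (P ⊕ L))
    (I' : P' → L' → Prop) (Par' : L' → L' → Prop) (Y : Set (P' ⊕ L'))
    (fp : P → P') (fl : L → L') : Prop where
  mapsTo : Set.MapsTo (Sum.map fp fl) X Y
  injOn : Set.InjOn (Sum.map fp fl) X
  incid_iff : ∀ p l, Sum.inl p ∈ X → Sum.inr l ∈ X → (I' (fp p) (fl l) ↔ I p l)
  par_iff : ∀ l l', Sum.inr l ∈ X → Sum.inr l' ∈ X → (Par' (fl l) (fl l') ↔ Par l l')

variable {I I₀ : P → L → Prop} {Par Par₀ : L → L → Prop} {X S A : Set (P ⊕ L)}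
  {I' I'' : P' → L' → Prop} {Par' Par'' : L' → L' → Prop} {Y Y' : Set (P' ⊕ L')}
  {fp : P → P'} {fl : L → L'}

namespace IsEmbedding

lemma fp_inj (hf : IsEmbedding I Par X I' Par' Y fp fl) {p q : P} (hp : Sum.inl p ∈ X)
    (hq : Sum.inl q ∈ X) (h : fp p = fp q) : p = q :=
  Sum.inl_injective (hf.injOn hp hq (by simp [h]))

lemma fl_inj (hf : IsEmbedding I Par X I' Par' Y fp fl) {l l' : L} (hl : Sum.inr l ∈ X)
    (hl' : Sum.inr l' ∈ X) (h : fl l = fl l') : l = l' :=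
  Sum.inr_injective (hf.injOn hl hl' (by simp [h]))

lemma mono (hf : IsEmbedding I Par X I' Par' Y fp fl) (hAX : A ⊆ X) :
    IsEmbedding I Par A I' Par' Y fp fl :=
  ⟨hf.mapsTo.mono_left hAX, hf.injOn.mono hAX,
    fun p l hp hl => hf.incid_iff p l (hAX hp) (hAX hl),
    fun l l' hl hl' => hf.par_iff l l' (hAX hl) (hAX hl')⟩

lemma of_agreeOn (hf : IsEmbedding I Par X I' Par' Y fp fl) (h : AgreeOn I' Par' I'' Par'' Y)
    (hYY' : Y ⊆ Y') : IsEmbedding I Par X I'' Par'' Y' fp fl :=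
  ⟨hf.mapsTo.mono_right hYY', hf.injOn,
    fun p l hp hl => (h.incid_iff _ _ (hf.mapsTo hp) (hf.mapsTo hl)).trans
      (hf.incid_iff p l hp hl),
    fun l l' hl hl' => (h.par_iff _ _ (hf.mapsTo hl) (hf.mapsTo hl')).trans
      (hf.par_iff l l' hl hl')⟩

lemma of_agreeOn_source (hf : IsEmbedding I Par X I' Par' Y fp fl)
    (h : AgreeOn I Par I₀ Par₀ X) : IsEmbedding I₀ Par₀ X I' Par' Y fp fl :=
  ⟨hf.mapsTo, hf.injOn,
    fun p l hp hl => (hf.incid_iff p l hp hl).trans (h.incid_iff p l hp hl).symm,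
    fun l l' hl hl' => (hf.par_iff l l' hl hl').trans (h.par_iff l l' hl hl').symm⟩

lemma linesThru_image (hf : IsEmbedding I Par X I' Par' Y fp fl) (hS : S ⊆ X) {p : P}
    (hp : Sum.inl p ∈ X) :
    linesThru I' (Sum.map fp fl '' S) (fp p) = fl '' linesThru I S p := by
  ext a
  constructor
  · rintro ⟨ha, hinc⟩
    obtain ⟨l, hl, rfl⟩ := mem_image_map_inr.mp ha
    exact ⟨l, ⟨hl, (hf.incid_iff p l hp (hS hl)).mp hinc⟩, rfl⟩
  · rintro ⟨l, ⟨hl, hinc⟩, rfl⟩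
    exact ⟨mem_image_map_inr.mpr ⟨l, hl, rfl⟩, (hf.incid_iff p l hp (hS hl)).mpr hinc⟩

lemma pointsOn_image (hf : IsEmbedding I Par X I' Par' Y fp fl) (hS : S ⊆ X) {l : L}
    (hl : Sum.inr l ∈ X) :
    pointsOn I' (Sum.map fp fl '' S) (fl l) = fp '' pointsOn I S l := by
  ext a
  constructor
  · rintro ⟨ha, hinc⟩
    obtain ⟨p, hp, rfl⟩ := mem_image_map_inl.mp ha
    exact ⟨p, ⟨hp, (hf.incid_iff p l (hS hp) hl).mp hinc⟩, rfl⟩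
  · rintro ⟨p, ⟨hp, hinc⟩, rfl⟩
    exact ⟨mem_image_map_inl.mpr ⟨p, hp, rfl⟩, (hf.incid_iff p l (hS hp) hl).mpr hinc⟩

lemma hyperfree_image (hf : IsEmbedding I Par X I' Par' Y fp fl) (hS : S ⊆ X) {x : P ⊕ L}
    (hx : x ∈ S) (h : Hyperfree I Par S x) :
    Hyperfree I' Par' (Sum.map fp fl '' S) (Sum.map fp fl x) := by
  rcases x with p | l
  · rw [Sum.map_inl, hyperfree_inl, hf.linesThru_image hS (hS hx)]
    exact (Set.encard_image_le _ _).trans h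
  · have hinj : Set.InjOn fp (pointsOn I S l) := fun p hp q hq h =>
      hf.fp_inj (hS hp.1) (hS hq.1) h
    rw [Sum.map_inr, hyperfree_inr, hf.pointsOn_image hS (hS hx), hinj.encard_image]
    refine h.imp_right fun h2 => ⟨h2.1, fun a ha hne hpar => ?_⟩
    obtain ⟨l', hl', rfl⟩ := mem_image_map_inr.mp ha
    exact h2.2 l' hl' (fun h => hne (h ▸ rfl))
      ((hf.par_iff l l' (hS hx) (hS hl')).mp hpar)

lemma isPartialAffine_image (hf : IsEmbedding I Par X I' Par' Y fp fl)
    (h : IsPartialAffine I Par X) : IsPartialAffine I' Par' (Sum.map fp fl '' X) := by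
  have hI := hf.incid_iff
  have hP := hf.par_iff
  refine ⟨?_, ?_, ?_, ?_, ?_, ?_⟩
  · intro a ha
    obtain ⟨l, hl, rfl⟩ := mem_image_map_inr.mp ha
    exact (hP l l hl hl).mpr (h.par_refl hl)
  · intro a a' ha ha'
    obtain ⟨l, hl, rfl⟩ := mem_image_map_inr.mp ha
    obtain ⟨l', hl', rfl⟩ := mem_image_map_inr.mp ha'
    rw [hP l l' hl hl', hP l' l hl' hl]
    exact h.par_symm hl hl'
  · intro a a' a'' ha ha' ha''
    obtain ⟨l, hl, rfl⟩ := mem_image_map_inr.mp ha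
    obtain ⟨l', hl', rfl⟩ := mem_image_map_inr.mp ha'
    obtain ⟨l'', hl'', rfl⟩ := mem_image_map_inr.mp ha''
    rw [hP l l' hl hl', hP l' l'' hl' hl'', hP l l'' hl hl'']
    exact h.par_trans hl hl' hl''
  · intro a b hab ha hb c c' hc hc'
    obtain ⟨p, hp, rfl⟩ := mem_image_map_inl.mp ha
    obtain ⟨q, hq, rfl⟩ := mem_image_map_inl.mp hb
    obtain ⟨l, hl, rfl⟩ := mem_image_map_inr.mp hc
    obtain ⟨l', hl', rfl⟩ := mem_image_map_inr.mp hc'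
    rw [hI p l hp hl, hI q l hq hl, hI p l' hp hl', hI q l' hq hl']
    intro h₁ h₂ h₃ h₄
    rw [h.eq_of_inc_inc (fun h => hab (congrArg fp h)) hp hq hl hl' h₁ h₂ h₃ h₄]
  · intro c c' hnp hc hc' a b ha hb
    obtain ⟨p, hp, rfl⟩ := mem_image_map_inl.mp ha
    obtain ⟨q, hq, rfl⟩ := mem_image_map_inl.mp hb
    obtain ⟨l, hl, rfl⟩ := mem_image_map_inr.mp hc
    obtain ⟨l', hl', rfl⟩ := mem_image_map_inr.mp hc'
    rw [hI p l hp hl, hI q l hq hl, hI p l' hp hl', hI q l' hq hl']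
    intro h₁ h₂ h₃ h₄
    by_contra hpq
    exact hnp ((hP l l' hl hl').mpr
      (h.par_of_inc_inc (fun h => hpq (congrArg fp h)) hp hq hl hl' h₁ h₂ h₃ h₄))
  · intro a ha c hc c' c'' hc' hc''
    obtain ⟨p, hp, rfl⟩ := mem_image_map_inl.mp ha
    obtain ⟨l, hl, rfl⟩ := mem_image_map_inr.mp hc
    obtain ⟨l', hl', rfl⟩ := mem_image_map_inr.mp hc'
    obtain ⟨l'', hl'', rfl⟩ := mem_image_map_inr.mp hc''
    rw [hI p l' hp hl', hI p l'' hp hl'', hP l' l hl' hl, hP l'' l hl'' hl]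
    intro h₁ h₂ h₃ h₄
    rw [h.eq_of_par_of_inc hp hl hl' hl'' h₁ h₂ h₃ h₄]

lemma openOver_image (hf : IsEmbedding I Par X I' Par' Y fp fl) (hAX : A ⊆ X)
    (h : OpenOver I Par A X) :
    OpenOver I' Par' (Sum.map fp fl '' A) (Sum.map fp fl '' X) := by
  intro T hT hTfin ⟨t, ht⟩
  set S := {x ∈ X | Sum.map fp fl x ∈ T}
  have hST : Sum.map fp fl '' S = T := by
    ext y
    constructor
    · rintro ⟨x, hx, rfl⟩; exact hx.2
    · intro hy
      obtain ⟨x, hx, rfl⟩ := (hT hy).1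
      exact ⟨x, ⟨hx, hy⟩, rfl⟩
  have hSX : S ⊆ X := fun x hx => hx.1
  have hSA : S ⊆ X \ A := fun x hx => ⟨hx.1, fun hxA => (hT hx.2).2 ⟨x, hxA, rfl⟩⟩
  have hSfin : S.Finite := Set.Finite.of_finite_image (hST ▸ hTfin) (hf.injOn.mono hSX)
  have hSne : S.Nonempty := by
    obtain ⟨x, hx, rfl⟩ := hST.symm ▸ ht
    exact ⟨x, hx⟩
  obtain ⟨c, hc, hfree⟩ := h S hSA hSfin hSne
  refine ⟨Sum.map fp fl c, hST ▸ Set.mem_image_of_mem _ hc, ?_⟩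
  rw [← hST, ← Set.image_union]
  exact hf.hyperfree_image (Set.union_subset hAX hSX) (Or.inr hc) hfree

lemma isOpen_image (hf : IsEmbedding I Par X I' Par' Y fp fl) (h : IsOpen I Par X) :
    IsOpen I' Par' (Sum.map fp fl '' X) := by
  rw [isOpen_iff_openOver_empty] at h ⊢
  simpa using hf.openOver_image (Set.empty_subset X) h

lemma of_eqOn_diff {fp' : P → P'} {fl' : L → L'} {b : P ⊕ L}
    (hf : IsEmbedding I Par (X \ {b}) I' Par' Y fp fl) (hb : b ∈ X)
    (heq : Set.EqOn (Sum.map fp' fl') (Sum.map fp fl) (X \ {b}))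
    (hbY : Sum.map fp' fl' b ∈ Y) (hbF : Sum.map fp' fl' b ∉ Sum.map fp fl '' (X \ {b}))
    (hinc : ∀ p l, Sum.inl p ∈ X → Sum.inr l ∈ X → (Sum.inl p = b ∨ Sum.inr l = b) →
      (I' (fp' p) (fl' l) ↔ I p l))
    (hpar : ∀ l l', Sum.inr l ∈ X → Sum.inr l' ∈ X → (Sum.inr l = b ∨ Sum.inr l' = b) →
      (Par' (fl' l) (fl' l') ↔ Par l l')) :
    IsEmbedding I Par X I' Par' Y fp' fl' := by
  have hX : X = insert b (X \ {b}) := (Set.insert_sdiff_self_of_mem hb).symm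
  have hfp : ∀ p, Sum.inl p ∈ X → Sum.inl p ≠ b → fp' p = fp p := fun p hp hpb =>
    Sum.inl_injective (heq ⟨hp, hpb⟩)
  have hfl : ∀ l, Sum.inr l ∈ X → Sum.inr l ≠ b → fl' l = fl l := fun l hl hlb =>
    Sum.inr_injective (heq ⟨hl, hlb⟩)
  refine ⟨?_, ?_, fun p l hp hl => ?_, fun l l' hl hl' => ?_⟩
  · intro z hz
    by_cases hzb : z = b
    · exact hzb ▸ hbY
    · exact heq ⟨hz, hzb⟩ ▸ hf.mapsTo ⟨hz, hzb⟩
  · rw [hX, Set.injOn_insert (fun h => h.2 rfl), heq.image_eq]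
    exact ⟨hf.injOn.congr heq.symm, hbF⟩
  · by_cases h : Sum.inl p = b ∨ Sum.inr l = b
    · exact hinc p l hp hl h
    push Not at h
    rw [hfp p hp h.1, hfl l hl h.2]
    exact hf.incid_iff p l ⟨hp, h.1⟩ ⟨hl, h.2⟩
  · by_cases h : Sum.inr l = b ∨ Sum.inr l' = b
    · exact hpar l l' hl hl' h
    push Not at h
    rw [hfl l hl h.1, hfl l' hl' h.2]
    exact hf.par_iff l l' ⟨hl, h.1⟩ ⟨hl', h.2⟩

lemma update_inl [DecidableEq P] {q : P}
    (hf : IsEmbedding I Par (X \ {Sum.inl q}) I' Par' Y fp fl) (hq : Sum.inl q ∈ X) {x : P'}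
    (hx : Sum.inl x ∈ Y) (hxF : Sum.inl x ∉ Sum.map fp fl '' (X \ {Sum.inl q}))
    (hinc : ∀ l, Sum.inr l ∈ X → (I' x (fl l) ↔ I q l)) :
    IsEmbedding I Par X I' Par' Y (Function.update fp q x) fl := by
  refine hf.of_eqOn_diff hq (eqOn_map_update_inl fp fl q x X) (by simpa using hx)
    (by simpa using hxF) ?_ ?_
  · rintro p l - hl (h | h)
    · obtain rfl := Sum.inl_injective h
      simpa using hinc l hl
    · simp at h
  · rintro l l' - - (h | h) <;> simp at h

lemma update_inr [DecidableEq L] {m : L} (hX : IsPartialAffine I Par X)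
    (hY : IsPartialAffine I' Par' Y)
    (hf : IsEmbedding I Par (X \ {Sum.inr m}) I' Par' Y fp fl) (hm : Sum.inr m ∈ X) {y : L'}
    (hy : Sum.inr y ∈ Y) (hyF : Sum.inr y ∉ Sum.map fp fl '' (X \ {Sum.inr m}))
    (hinc : ∀ p, Sum.inl p ∈ X → (I' (fp p) y ↔ I p m))
    (hpar : ∀ l, Sum.inr l ∈ X → l ≠ m → (Par' y (fl l) ↔ Par m l)) :
    IsEmbedding I Par X I' Par' Y fp (Function.update fl m y) := by
  have hlY : ∀ l, Sum.inr l ∈ X → l ≠ m → Sum.inr (fl l) ∈ Y := fun l hl hlm =>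
    hf.mapsTo (⟨hl, by simpa using hlm⟩ : Sum.inr l ∈ X \ {Sum.inr m})
  have hpar' : ∀ l, Sum.inr l ∈ X → l ≠ m → (Par' (fl l) y ↔ Par l m) := fun l hl hlm =>
    ⟨fun h => hX.par_symm hm hl ((hpar l hl hlm).mp (hY.par_symm (hlY l hl hlm) hy h)),
      fun h => hY.par_symm hy (hlY l hl hlm) ((hpar l hl hlm).mpr (hX.par_symm hl hm h))⟩
  refine hf.of_eqOn_diff hm (eqOn_map_update_inr fp fl m y X) (by simpa using hy)
    (by simpa using hyF) ?_ ?_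
  · rintro p l hp - (h | h)
    · simp at h
    · obtain rfl := Sum.inr_injective h
      simpa using hinc p hp
  · rintro l l' hl hl' h
    rcases eq_or_ne m l with hml | hlm <;> rcases eq_or_ne l l' with hll' | hl'l
    all_goals try subst hml
    all_goals try subst hll'
    · simpa using iff_of_true (hY.par_refl hy) (hX.par_refl hm)
    · simpa [Function.update_of_ne hl'l.symm] using hpar l' hl' hl'l.symm
    · simpa [Function.update_of_ne hlm.symm] using
        iff_of_true (hY.par_refl (hlY l hl hlm.symm)) (hX.par_refl hl)
    · obtain rfl : l' = m := by
        rcases h with h | h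
        · exact absurd (Sum.inr_injective h).symm hlm
        · exact Sum.inr_injective h
      simpa [Function.update_of_ne hlm.symm] using hpar' l hl hlm.symm

end IsEmbedding

lemma isEmbedding_relationMap {u : P → P'} {v : L → L'} (hu : Function.Injective u)
    (hv : Function.Injective v) (I : P → L → Prop) (Par : L → L → Prop) (X : Set (P ⊕ L)) :
    IsEmbedding I Par X (Relation.Map I u v) (Relation.Map Par v v) (Sum.map u v '' X) u v :=
  ⟨Set.mapsTo_image _ _, (Sum.map_injective.mpr ⟨hu, hv⟩).injOn,
    fun p l _ _ => Relation.map_apply_apply hu hv I p l,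
    fun l l' _ _ => Relation.map_apply_apply hv hv Par l l'⟩

end Embedding

section Extension

variable {I I₁ I₂ : P → L → Prop} {Par Par₁ Par₂ : L → L → Prop} {X D D₁ D₂ : Set (P ⊕ L)}

structure IsOpenExtension (I : P → L → Prop) (Par : L → L → Prop) (D : Set (P ⊕ L))
    (I' : P → L → Prop) (Par' : L → L → Prop) (D' : Set (P ⊕ L)) : Prop where
  subset : D ⊆ D'
  agreeOn : AgreeOn I Par I' Par' D
  openOver : OpenOver I' Par' D D'

namespace IsOpenExtension

lemma refl : IsOpenExtension I Par D I Par D :=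
  ⟨subset_rfl, AgreeOn.refl, fun _ hS _ ⟨_, hx⟩ => absurd (hS hx).1 (hS hx).2⟩

lemma openOver_of_subset (h : IsOpenExtension I Par D I₁ Par₁ D₁) (hXD : X ⊆ D)
    (hX : OpenOver I Par X D) : OpenOver I₁ Par₁ X D₁ :=
  (hX.of_agreeOn h.agreeOn hXD).trans hXD h.openOver

lemma trans (h₁ : IsOpenExtension I Par D I₁ Par₁ D₁)
    (h₂ : IsOpenExtension I₁ Par₁ D₁ I₂ Par₂ D₂) : IsOpenExtension I Par D I₂ Par₂ D₂ :=
  ⟨h₁.subset.trans h₂.subset, h₁.agreeOn.trans (h₂.agreeOn.mono h₁.subset),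
    h₂.openOver_of_subset h₁.subset h₁.openOver⟩

lemma isOpen (h : IsOpenExtension I Par D I₁ Par₁ D₁) (hD : IsOpen I Par D) :
    IsOpen I₁ Par₁ D₁ := by
  rw [isOpen_iff_openOver_empty] at hD ⊢
  exact h.openOver_of_subset (Set.empty_subset D) hD

end IsOpenExtension

structure IsStrongEmbedding (I : P → L → Prop) (Par : L → L → Prop) (X : Set (P ⊕ L))
    (I' : P' → L' → Prop) (Par' : L' → L' → Prop) (Y : Set (P' ⊕ L'))
    (fp : P → P') (fl : L → L') : Prop extends IsEmbedding I Par X I' Par' Y fp fl where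
  openOver_image : OpenOver I' Par' (Sum.map fp fl '' X) Y

end Extension

section Adjoin

variable {I : P → L → Prop} {Par : L → L → Prop} {X D : Set (P ⊕ L)}

open Classical in
def adjoinPoint (I : P → L → Prop) (x : P) (Λ : Set L) : P → L → Prop :=
  fun p l => if p = x then l ∈ Λ else I p l

open Classical in
def adjoinLineIncid (I : P → L → Prop) (y : L) (Q : Set P) : P → L → Prop :=
  fun p l => if l = y then p ∈ Q else I p l

open Classical in
def adjoinLinePar (Par : L → L → Prop) (y : L) (π : L → Prop) : L → L → Prop :=
  fun l l' => if l = y ∨ l' = y then (l = y ∨ π l) ∧ (l' = y ∨ π l') else Par l l'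

variable {x p : P} {y l l' : L} {Λ : Set L} {Q : Set P} {π : L → Prop}

@[simp] lemma adjoinPoint_self : adjoinPoint I x Λ x l ↔ l ∈ Λ := by simp [adjoinPoint]

lemma adjoinPoint_of_ne (h : p ≠ x) : adjoinPoint I x Λ p l ↔ I p l := by
  simp [adjoinPoint, h]

@[simp] lemma adjoinLineIncid_self : adjoinLineIncid I y Q p y ↔ p ∈ Q := by
  simp [adjoinLineIncid]

lemma adjoinLineIncid_of_ne (h : l ≠ y) : adjoinLineIncid I y Q p l ↔ I p l := by
  simp [adjoinLineIncid, h]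

@[simp] lemma adjoinLinePar_self : adjoinLinePar Par y π y y := by simp [adjoinLinePar]

lemma adjoinLinePar_self_left (h : l ≠ y) : adjoinLinePar Par y π y l ↔ π l := by
  simp [adjoinLinePar, h]

lemma adjoinLinePar_self_right (h : l ≠ y) : adjoinLinePar Par y π l y ↔ π l := by
  simp [adjoinLinePar, h]

lemma adjoinLinePar_of_ne (h : l ≠ y) (h' : l' ≠ y) : adjoinLinePar Par y π l l' ↔ Par l l' := by
  simp [adjoinLinePar, h, h']

lemma hyperfree_adjoinPoint (hΛ : Λ.encard ≤ 2) :
    Hyperfree (adjoinPoint I x Λ) Par X (Sum.inl x) :=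
  (Set.encard_le_encard fun _ hl => (adjoinPoint_self (I := I)).mp hl.2).trans hΛ

lemma hyperfree_adjoinLine
    (hQ : Q.encard ≤ 1 ∨ (Q.encard ≤ 2 ∧ ∀ l, Sum.inr l ∈ X → l ≠ y → ¬ π l)) :
    Hyperfree (adjoinLineIncid I y Q) (adjoinLinePar Par y π) X (Sum.inr y) := by
  have hsub := Set.encard_le_encard fun p (hp : p ∈ pointsOn (adjoinLineIncid I y Q) X y) =>
    adjoinLineIncid_self.mp hp.2
  rcases hQ with hQ | ⟨hQ, hπ⟩
  · exact Or.inl (hsub.trans hQ)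
  · rcases (hsub.trans hQ).lt_or_eq with h1 | h2
    · exact Or.inl (Order.le_of_lt_add_one h1)
    · exact Or.inr ⟨h2, fun l hl hne hpar => hπ l hl hne ((adjoinLinePar_self_left hne).mp hpar)⟩

lemma IsPartialAffine.adjoinPoint (hD : IsPartialAffine I Par D) (hx : Sum.inl x ∉ D)
    (hΛpar : ∀ l l', l ∈ Λ → l' ∈ Λ → Par l l' → l = l')
    (hΛmeet : ∀ d, Sum.inl d ∈ D → ∀ l l', l ∈ Λ → l' ∈ Λ → I d l → I d l' → l = l') :
    IsPartialAffine (Affine.adjoinPoint I x Λ) Par (insert (Sum.inl x) D) := by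
  have hne : ∀ p, Sum.inl p ∈ D → p ≠ x := fun p hp h => hx (h ▸ hp)
  have hpt : ∀ p, Sum.inl p ∈ insert (Sum.inl x) D → p = x ∨ Sum.inl p ∈ D := by simp
  have hline : ∀ l, Sum.inr l ∈ insert (Sum.inl x) D → Sum.inr l ∈ D := by simp
  have hold : ∀ p l, Sum.inl p ∈ D → (Affine.adjoinPoint I x Λ p l ↔ I p l) :=
    fun p l hp => adjoinPoint_of_ne (hne p hp)
  have hmeet : ∀ q l l', Sum.inl q ∈ D → Affine.adjoinPoint I x Λ x l →
      Affine.adjoinPoint I x Λ x l' → Affine.adjoinPoint I x Λ q l →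
      Affine.adjoinPoint I x Λ q l' → l = l' := by
    intro q l l' hq h₁ h₂ h₃ h₄
    rw [adjoinPoint_self] at h₁ h₂
    rw [hold q l hq] at h₃
    rw [hold q l' hq] at h₄
    exact hΛmeet q hq l l' h₁ h₂ h₃ h₄
  refine ⟨fun l hl => hD.par_refl (hline l hl),
    fun l l' hl hl' => hD.par_symm (hline l hl) (hline l' hl'),
    fun l l' l'' hl hl' hl'' => hD.par_trans (hline l hl) (hline l' hl') (hline l'' hl''),
    ?_, ?_, ?_⟩
  · intro p q hpq hp hq l l' hl hl' h₁ h₂ h₃ h₄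
    rcases hpt p hp with rfl | hpD <;> rcases hpt q hq with rfl | hqD
    · exact absurd rfl hpq
    · exact hmeet q l l' hqD h₁ h₃ h₂ h₄
    · exact hmeet p l l' hpD h₂ h₄ h₁ h₃
    · rw [hold p l hpD, hold p l' hpD, hold q l hqD, hold q l' hqD] at *
      exact hD.eq_of_inc_inc hpq hpD hqD (hline l hl) (hline l' hl') h₁ h₂ h₃ h₄
  · intro l l' hnp hl hl' p q hp hq h₁ h₂ h₃ h₄
    rcases hpt p hp with rfl | hpD <;> rcases hpt q hq with rfl | hqD
    · rfl
    · exact absurd (hmeet q l l' hqD h₁ h₂ h₃ h₄ ▸ hD.par_refl (hline l hl)) hnp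
    · exact absurd (hmeet p l l' hpD h₃ h₄ h₁ h₂ ▸ hD.par_refl (hline l hl)) hnp
    · rw [hold p l hpD, hold p l' hpD, hold q l hqD, hold q l' hqD] at *
      by_contra hpq
      exact hnp (hD.par_of_inc_inc hpq hpD hqD (hline l hl) (hline l' hl') h₁ h₂ h₃ h₄)
  · intro p hp l hl l' l'' hl' hl'' h₁ h₂ h₃ h₄
    rcases hpt p hp with rfl | hp
    · rw [adjoinPoint_self] at h₁ h₃
      exact hΛpar l' l'' h₁ h₃ (hD.par_trans (hline l' hl') (hline l hl) (hline l'' hl'') h₂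
        (hD.par_symm (hline l'' hl'') (hline l hl) h₄))
    · rw [hold p l' hp] at h₁
      rw [hold p l'' hp] at h₃
      exact hD.eq_of_par_of_inc hp (hline l hl) (hline l' hl') (hline l'' hl'') h₁ h₂ h₃ h₄

lemma isOpenExtension_adjoinPoint (hx : Sum.inl x ∉ D) (hΛ : Λ.encard ≤ 2) :
    IsOpenExtension I Par D (adjoinPoint I x Λ) Par (insert (Sum.inl x) D) :=
  ⟨Set.subset_insert _ _,
    ⟨fun _ _ hp _ => adjoinPoint_of_ne fun h => hx (h ▸ hp), fun _ _ _ _ => Iff.rfl⟩,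
    openOver_insert_of_hyperfree (hyperfree_adjoinPoint hΛ)⟩

lemma adjoinLine_eq_of_par_of_inc (hD : IsPartialAffine I Par D) (hy : Sum.inr y ∉ D)
    (hπ : ∀ l l', Sum.inr l ∈ D → Sum.inr l' ∈ D → π l → (π l' ↔ Par l l'))
    (hQπ : ∀ p ∈ Q, ∀ l, Sum.inr l ∈ D → I p l → ¬ π l) {p : P} (hp : Sum.inl p ∈ D)
    {l₀ l l' : L} (hl₀ : Sum.inr l₀ ∈ insert (Sum.inr y) D)
    (hl : Sum.inr l ∈ insert (Sum.inr y) D) (hl' : Sum.inr l' ∈ insert (Sum.inr y) D)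
    (h₁ : adjoinLineIncid I y Q p l) (h₂ : adjoinLinePar Par y π l l₀)
    (h₃ : adjoinLineIncid I y Q p l') (h₄ : adjoinLinePar Par y π l' l₀) : l = l' := by
  have hne : ∀ l, Sum.inr l ∈ D → l ≠ y := fun l hl h => hy (h ▸ hl)
  have hline : ∀ l, Sum.inr l ∈ insert (Sum.inr y) D → y = l ∨ Sum.inr l ∈ D := by
    simp [eq_comm]
  have hnew : ∀ l, Sum.inr l ∈ D → adjoinLineIncid I y Q p y → adjoinLineIncid I y Q p l →
      adjoinLinePar Par y π y l₀ → adjoinLinePar Par y π l l₀ → False := by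
    intro l hl h₁ h₂ h₃ h₄
    rw [adjoinLineIncid_self] at h₁
    rw [adjoinLineIncid_of_ne (hne l hl)] at h₂
    refine hQπ p h₁ l hl h₂ ?_
    rcases hline l₀ hl₀ with rfl | hl₀
    · exact (adjoinLinePar_self_right (hne l hl)).mp h₄
    · rw [adjoinLinePar_self_left (hne l₀ hl₀)] at h₃
      rw [adjoinLinePar_of_ne (hne l hl) (hne l₀ hl₀)] at h₄
      exact (hπ l₀ l hl₀ hl h₃).mpr (hD.par_symm hl hl₀ h₄)
  rcases hline l hl with rfl | hl <;> rcases hline l' hl' with rfl | hl'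
  · rfl
  · exact (hnew l' hl' h₁ h₃ h₂ h₄).elim
  · exact (hnew l hl h₃ h₁ h₄ h₂).elim
  rw [adjoinLineIncid_of_ne (hne l hl)] at h₁
  rw [adjoinLineIncid_of_ne (hne l' hl')] at h₃
  rcases hline l₀ hl₀ with rfl | hl₀
  · rw [adjoinLinePar_self_right (hne l hl)] at h₂
    rw [adjoinLinePar_self_right (hne l' hl')] at h₄
    exact hD.eq_of_par_of_inc hp hl hl hl' h₁ (hD.par_refl hl) h₃
      (hD.par_symm hl hl' ((hπ l l' hl hl' h₂).mp h₄))
  · rw [adjoinLinePar_of_ne (hne l hl) (hne l₀ hl₀)] at h₂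
    rw [adjoinLinePar_of_ne (hne l' hl') (hne l₀ hl₀)] at h₄
    exact hD.eq_of_par_of_inc hp hl₀ hl hl' h₁ h₂ h₃ h₄

lemma IsPartialAffine.adjoinLine (hD : IsPartialAffine I Par D) (hy : Sum.inr y ∉ D)
    (hπ : ∀ l l', Sum.inr l ∈ D → Sum.inr l' ∈ D → π l → (π l' ↔ Par l l'))
    (hQ : ∀ l, Sum.inr l ∈ D → ∀ p p', p ∈ Q → p' ∈ Q → I p l → I p' l → p = p')
    (hQπ : ∀ p ∈ Q, ∀ l, Sum.inr l ∈ D → I p l → ¬ π l) :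
    IsPartialAffine (adjoinLineIncid I y Q) (adjoinLinePar Par y π) (insert (Sum.inr y) D) := by
  have hne : ∀ l, Sum.inr l ∈ D → l ≠ y := fun l hl h => hy (h ▸ hl)
  have hline : ∀ l, Sum.inr l ∈ insert (Sum.inr y) D → y = l ∨ Sum.inr l ∈ D := by
    simp [eq_comm]
  have hpt : ∀ p, Sum.inl p ∈ insert (Sum.inr y) D → Sum.inl p ∈ D := by simp
  have hold : ∀ p l, Sum.inr l ∈ D → (adjoinLineIncid I y Q p l ↔ I p l) :=
    fun _ l hl => adjoinLineIncid_of_ne (hne l hl)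
  have hmeet : ∀ l p q, Sum.inr l ∈ D → adjoinLineIncid I y Q p y →
      adjoinLineIncid I y Q q y → adjoinLineIncid I y Q p l → adjoinLineIncid I y Q q l →
      p = q := by
    intro l p q hl h₁ h₂ h₃ h₄
    rw [adjoinLineIncid_self] at h₁ h₂
    rw [hold p l hl] at h₃
    rw [hold q l hl] at h₄
    exact hQ l hl p q h₁ h₂ h₃ h₄
  refine ⟨?_, ?_, ?_, ?_, ?_, fun p hp l₀ hl₀ l l' hl hl' =>
    adjoinLine_eq_of_par_of_inc hD hy hπ hQπ (hpt p hp) hl₀ hl hl'⟩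
  · intro l hl
    rcases hline l hl with rfl | hl
    · exact adjoinLinePar_self
    · exact (adjoinLinePar_of_ne (hne l hl) (hne l hl)).mpr (hD.par_refl hl)
  · intro l l' hl hl'
    rcases hline l hl with rfl | hl <;> rcases hline l' hl' with rfl | hl'
    all_goals simp_all [adjoinLinePar, hD.par_symm]
  · intro l l' l'' hl hl' hl''
    rcases hline l hl with rfl | hl <;> rcases hline l' hl' with rfl | hl' <;>
      rcases hline l'' hl'' with rfl | hl''
    all_goals simp_all [adjoinLinePar]
    · exact fun h₁ h₂ => (hπ l' l'' hl' hl'' h₁).mpr h₂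
    · exact fun h₁ h₂ => (hπ l l'' hl hl'' h₁).mp h₂
    · exact fun h₁ h₂ => (hπ l' l hl' hl h₂).mpr (hD.par_symm hl hl' h₁)
    · exact hD.par_trans hl hl' hl''
  · intro p q hpq hp hq l l' hl hl'
    rcases hline l hl with rfl | hl <;> rcases hline l' hl' with rfl | hl'
    · simp
    · exact fun h₁ h₂ h₃ h₄ => absurd (hmeet l' p q hl' h₁ h₂ h₃ h₄) hpq
    · exact fun h₁ h₂ h₃ h₄ => absurd (hmeet l p q hl h₃ h₄ h₁ h₂) hpq
    · rw [hold p l hl, hold q l hl, hold p l' hl', hold q l' hl']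
      exact hD.eq_of_inc_inc hpq (hpt p hp) (hpt q hq) hl hl'
  · intro l l' hnp hl hl' p q hp hq
    rcases hline l hl with rfl | hl <;> rcases hline l' hl' with rfl | hl'
    · exact absurd adjoinLinePar_self hnp
    · exact fun h₁ h₂ h₃ h₄ => hmeet l' p q hl' h₁ h₃ h₂ h₄
    · exact fun h₁ h₂ h₃ h₄ => hmeet l p q hl h₂ h₄ h₁ h₃
    · rw [hold p l hl, hold q l hl, hold p l' hl', hold q l' hl']
      rw [adjoinLinePar_of_ne (hne l hl) (hne l' hl')] at hnp
      intro h₁ h₂ h₃ h₄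
      by_contra hpq
      exact hnp (hD.par_of_inc_inc hpq (hpt p hp) (hpt q hq) hl hl' h₁ h₂ h₃ h₄)

lemma isOpenExtension_adjoinLine (hy : Sum.inr y ∉ D)
    (hQ : Q.encard ≤ 1 ∨ (Q.encard ≤ 2 ∧ ∀ l, Sum.inr l ∈ D → ¬ π l)) :
    IsOpenExtension I Par D (adjoinLineIncid I y Q) (adjoinLinePar Par y π)
      (insert (Sum.inr y) D) := by
  have hne : ∀ l, Sum.inr l ∈ D → l ≠ y := fun l hl h => hy (h ▸ hl)
  refine ⟨Set.subset_insert _ _,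
    ⟨fun _ l _ hl => adjoinLineIncid_of_ne (hne l hl),
      fun l l' hl hl' => adjoinLinePar_of_ne (hne l hl) (hne l' hl')⟩,
    openOver_insert_of_hyperfree (hyperfree_adjoinLine ?_)⟩
  refine hQ.imp_right fun h => ⟨h.1, fun l hl hly => h.2 l ?_⟩
  simpa [hly] using hl

end Adjoin

section Step

def ExtendsStrongly (IB : P → L → Prop) (ParB : L → L → Prop) (B₀ B : Set (P ⊕ L))
    (ID : P' → L' → Prop) (ParD : L' → L' → Prop) (D : Set (P' ⊕ L')) (fp : P → P')
    (fl : L → L') : Prop :=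
  ∃ (ID' : P' → L' → Prop) (ParD' : L' → L' → Prop) (D' : Set (P' ⊕ L')) (fp' : P → P')
    (fl' : L → L'), IsOpenExtension ID ParD D ID' ParD' D' ∧ D'.Finite ∧
    IsPartialAffine ID' ParD' D' ∧ IsStrongEmbedding IB ParB B ID' ParD' D' fp' fl' ∧
    Set.EqOn (Sum.map fp' fl') (Sum.map fp fl) B₀

variable {IB : P → L → Prop} {ParB : L → L → Prop} {B : Set (P ⊕ L)}
  {ID ID' : P' → L' → Prop} {ParD ParD' : L' → L' → Prop} {D D' : Set (P' ⊕ L')}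
  {fp : P → P'} {fl : L → L'}

lemma IsOpenExtension.isStrongEmbedding (h : IsOpenExtension ID ParD D ID' ParD' D')
    (hf : IsStrongEmbedding IB ParB B ID ParD D fp fl) :
    IsStrongEmbedding IB ParB B ID' ParD' D' fp fl :=
  ⟨hf.toIsEmbedding.of_agreeOn h.agreeOn h.subset,
    h.openOver_of_subset hf.mapsTo.image_subset hf.openOver_image⟩

lemma extendsStrongly_update_inl (hext : IsOpenExtension ID ParD D ID' ParD' D')
    (hD'fin : D'.Finite) (hD'pa : IsPartialAffine ID' ParD' D') {q : P} (hq : Sum.inl q ∈ B)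
    (hf : IsStrongEmbedding IB ParB (B \ {Sum.inl q}) ID' ParD' D' fp fl) {x : P'}
    (hx : Sum.inl x ∈ D') (hxF : Sum.inl x ∉ Sum.map fp fl '' (B \ {Sum.inl q}))
    (hinc : ∀ l, Sum.inr l ∈ B → (ID' x (fl l) ↔ IB q l))
    (hnew : ∀ S, S ⊆ D' \ insert (Sum.inl x) (Sum.map fp fl '' (B \ {Sum.inl q})) →
      ∀ a, Sum.inr a ∈ S → Hyperfree ID' ParD'
        (insert (Sum.inl x) (Sum.map fp fl '' (B \ {Sum.inl q}) ∪ S)) (Sum.inl x) →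
      ¬ ID' x a) :
    ExtendsStrongly IB ParB (B \ {Sum.inl q}) B ID ParD D fp fl := by
  classical
  refine ⟨ID', ParD', D', Function.update fp q x, fl, hext, hD'fin, hD'pa,
    ⟨hf.toIsEmbedding.update_inl hq hx hxF hinc, ?_⟩, eqOn_map_update_inl fp fl q x B⟩
  rw [image_eq_insert_of_eqOn hq (eqOn_map_update_inl fp fl q x B), Sum.map_inl,
    Function.update_self]
  exact hf.openOver_image.insert_left hx hxF fun S hS e he hfe hx' =>
    hfe.insert_inl fun a hea => hnew S hS a (hea ▸ he) hx'

lemma extendsStrongly_update_inr (hext : IsOpenExtension ID ParD D ID' ParD' D')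
    (hD'fin : D'.Finite) (hD'pa : IsPartialAffine ID' ParD' D')
    (hBpa : IsPartialAffine IB ParB B) {m : L} (hm : Sum.inr m ∈ B)
    (hf : IsStrongEmbedding IB ParB (B \ {Sum.inr m}) ID' ParD' D' fp fl) {y : L'}
    (hy : Sum.inr y ∈ D') (hyF : Sum.inr y ∉ Sum.map fp fl '' (B \ {Sum.inr m}))
    (hinc : ∀ p, Sum.inl p ∈ B → (ID' (fp p) y ↔ IB p m))
    (hpar : ∀ l, Sum.inr l ∈ B → l ≠ m → (ParD' y (fl l) ↔ ParB m l))
    (hnew_point : ∀ S, S ⊆ D' \ insert (Sum.inr y) (Sum.map fp fl '' (B \ {Sum.inr m})) →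
      ∀ a, Sum.inl a ∈ S → Hyperfree ID' ParD'
        (insert (Sum.inr y) (Sum.map fp fl '' (B \ {Sum.inr m}) ∪ S)) (Sum.inr y) →
      ¬ ID' a y)
    (hnew_line : ∀ S, S ⊆ D' \ insert (Sum.inr y) (Sum.map fp fl '' (B \ {Sum.inr m})) →
      ∀ a, Sum.inr a ∈ S → a ≠ y → ParD' a y →
      Hyperfree ID' ParD' (Sum.map fp fl '' (B \ {Sum.inr m}) ∪ S) (Sum.inr a) →
      Hyperfree ID' ParD'
        (insert (Sum.inr y) (Sum.map fp fl '' (B \ {Sum.inr m}) ∪ S)) (Sum.inr y) →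
      (pointsOn ID' (Sum.map fp fl '' (B \ {Sum.inr m}) ∪ S) a).encard ≤ 1) :
    ExtendsStrongly IB ParB (B \ {Sum.inr m}) B ID ParD D fp fl := by
  classical
  refine ⟨ID', ParD', D', fp, Function.update fl m y, hext, hD'fin, hD'pa,
    ⟨hf.toIsEmbedding.update_inr hBpa hD'pa hm hy hyF hinc hpar, ?_⟩,
    eqOn_map_update_inr fp fl m y B⟩
  rw [image_eq_insert_of_eqOn hm (eqOn_map_update_inr fp fl m y B), Sum.map_inr,
    Function.update_self]
  exact hf.openOver_image.insert_left hy hyF fun S hS e he hfe hy' =>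
    hfe.insert_inr (fun a hea => hnew_point S hS a (hea ▸ he) hy')
      fun a hea hay hpar => hnew_line S hS a (hea ▸ he) hay hpar (hea ▸ hfe) hy'

lemma extendsStrongly_point_of_meet (hBpa : IsPartialAffine IB ParB B) {q : P}
    (hq : Sum.inl q ∈ B) (hfree : (linesThru IB B q).encard ≤ 2) (hDfin : D.Finite)
    (hDpa : IsPartialAffine ID ParD D)
    (hf : IsStrongEmbedding IB ParB (B \ {Sum.inl q}) ID ParD D fp fl) {l₁ l₂ : L}
    (hl₁ : l₁ ∈ linesThru IB B q) (hl₂ : l₂ ∈ linesThru IB B q) (hne : l₁ ≠ l₂) {d : P'}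
    (hd : Sum.inl d ∈ D) (hd₁ : ID d (fl l₁)) (hd₂ : ID d (fl l₂)) :
    ExtendsStrongly IB ParB (B \ {Sum.inl q}) B ID ParD D fp fl := by
  set F := Sum.map fp fl '' (B \ {Sum.inl q})
  have hlineB : ∀ l, Sum.inr l ∈ B → Sum.inr l ∈ B \ {Sum.inl q} := fun l hl => ⟨hl, by simp⟩
  have hflF : ∀ l, Sum.inr l ∈ B → Sum.inr (fl l) ∈ F := fun l hl => ⟨_, hlineB l hl, rfl⟩
  have hthird : ∀ X, F ⊆ X → Hyperfree ID ParD X (Sum.inl d) → ∀ a, Sum.inr a ∈ X →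
      ID d a → a = fl l₁ ∨ a = fl l₂ := fun X hFX h a ha hda =>
    eq_or_eq_of_encard_le_two h ⟨hFX (hflF l₁ hl₁.1), hd₁⟩ ⟨hFX (hflF l₂ hl₂.1), hd₂⟩
      ⟨ha, hda⟩ fun h => hne (hf.fl_inj (hlineB l₁ hl₁.1) (hlineB l₂ hl₂.1) h)
  have hdF : Sum.inl d ∉ F := by
    intro h
    obtain ⟨p, hp, rfl⟩ := mem_image_map_inl.mp h
    exact hne (hBpa.eq_of_inc_inc (fun h => hp.2 (congrArg _ h)) hp.1 hq hl₁.1 hl₂.1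
      ((hf.incid_iff p l₁ hp (hlineB l₁ hl₁.1)).mp hd₁) hl₁.2
      ((hf.incid_iff p l₂ hp (hlineB l₂ hl₂.1)).mp hd₂) hl₂.2)
  obtain ⟨-, rfl, hdfree⟩ := hf.openOver_image {Sum.inl d}
    (Set.singleton_subset_iff.mpr ⟨hd, hdF⟩) (Set.finite_singleton _) (Set.singleton_nonempty _)
  refine extendsStrongly_update_inl IsOpenExtension.refl hDfin hDpa hq hf hd hdF
    (fun l hl => ⟨fun h => ?_, fun h => ?_⟩) fun S hS a ha hd' hda => ?_
  · rcases hthird _ Set.subset_union_left hdfree (fl l) (Or.inl (hflF l hl)) h with h | h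
    · exact hf.fl_inj (hlineB l hl) (hlineB l₁ hl₁.1) h ▸ hl₁.2
    · exact hf.fl_inj (hlineB l hl) (hlineB l₂ hl₂.1) h ▸ hl₂.2
  · rcases eq_or_eq_of_encard_le_two hfree hl₁ hl₂ ⟨hl, h⟩ hne with rfl | rfl
    exacts [hd₁, hd₂]
  · rcases hthird _ (fun z hz => Or.inr (Or.inl hz)) hd' a (Or.inr (Or.inr ha)) hda
      with rfl | rfl
    exacts [(hS ha).2 (Or.inr (hflF l₁ hl₁.1)), (hS ha).2 (Or.inr (hflF l₂ hl₂.1))]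

lemma extendsStrongly_point_of_not_meet [Infinite P'] (hBpa : IsPartialAffine IB ParB B)
    {q : P} (hq : Sum.inl q ∈ B) (hfree : (linesThru IB B q).encard ≤ 2) (hDfin : D.Finite)
    (hDpa : IsPartialAffine ID ParD D)
    (hf : IsStrongEmbedding IB ParB (B \ {Sum.inl q}) ID ParD D fp fl)
    (hmeet : ¬ ∃ d, Sum.inl d ∈ D ∧ ∃ l₁ ∈ linesThru IB B q, ∃ l₂ ∈ linesThru IB B q,
      l₁ ≠ l₂ ∧ ID d (fl l₁) ∧ ID d (fl l₂)) :
    ExtendsStrongly IB ParB (B \ {Sum.inl q}) B ID ParD D fp fl := by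
  obtain ⟨x, hx⟩ : ∃ x, Sum.inl x ∉ D :=
    (hDfin.preimage Sum.inl_injective.injOn).exists_notMem
  set Λ := fl '' linesThru IB B q
  have hlineB : ∀ l, Sum.inr l ∈ B → Sum.inr l ∈ B \ {Sum.inl q} := fun l hl => ⟨hl, by simp⟩
  have hext : IsOpenExtension ID ParD D (adjoinPoint ID x Λ) ParD (insert (Sum.inl x) D) :=
    isOpenExtension_adjoinPoint hx ((Set.encard_image_le _ _).trans hfree)
  have hpa : IsPartialAffine (adjoinPoint ID x Λ) ParD (insert (Sum.inl x) D) := by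
    refine hDpa.adjoinPoint hx ?_ ?_
    · rintro _ _ ⟨l, hl, rfl⟩ ⟨l', hl', rfl⟩ h
      rw [hf.par_iff l l' (hlineB l hl.1) (hlineB l' hl'.1)] at h
      rw [hBpa.eq_of_par_of_inc hq hl'.1 hl.1 hl'.1 hl.2 h hl'.2 (hBpa.par_refl hl'.1)]
    · rintro d hd _ _ ⟨l, hl, rfl⟩ ⟨l', hl', rfl⟩ h h'
      by_contra hne
      exact hmeet ⟨d, hd, l, hl, l', hl', fun h => hne (h ▸ rfl), h, h'⟩
  refine extendsStrongly_update_inl hext (hDfin.insert _) hpa hq (hext.isStrongEmbedding hf)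
    (Set.mem_insert _ _) (fun h => hx (hf.mapsTo.image_subset h)) (fun l hl => ?_) ?_
  · rw [adjoinPoint_self]
    exact ⟨fun ⟨l', hl', h⟩ => hf.fl_inj (hlineB l' hl'.1) (hlineB l hl) h ▸ hl'.2,
      fun h => ⟨l, ⟨hl, h⟩, rfl⟩⟩
  · rintro S hS a ha - hxa
    obtain ⟨l, hl, rfl⟩ := adjoinPoint_self.mp hxa
    exact (hS ha).2 (Or.inr ⟨_, hlineB l hl.1, rfl⟩)

lemma extendsStrongly_point [Infinite P'] (hBpa : IsPartialAffine IB ParB B) {q : P}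
    (hq : Sum.inl q ∈ B) (hfree : Hyperfree IB ParB B (Sum.inl q)) (hDfin : D.Finite)
    (hDpa : IsPartialAffine ID ParD D)
    (hf : IsStrongEmbedding IB ParB (B \ {Sum.inl q}) ID ParD D fp fl) :
    ExtendsStrongly IB ParB (B \ {Sum.inl q}) B ID ParD D fp fl := by
  by_cases hmeet : ∃ d, Sum.inl d ∈ D ∧ ∃ l₁ ∈ linesThru IB B q, ∃ l₂ ∈ linesThru IB B q,
      l₁ ≠ l₂ ∧ ID d (fl l₁) ∧ ID d (fl l₂)
  · obtain ⟨d, hd, l₁, hl₁, l₂, hl₂, hne, hd₁, hd₂⟩ := hmeet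
    exact extendsStrongly_point_of_meet hBpa hq hfree hDfin hDpa hf hl₁ hl₂ hne hd hd₁ hd₂
  · exact extendsStrongly_point_of_not_meet hBpa hq hfree hDfin hDpa hf hmeet

lemma extendsStrongly_line_of_two_points (hBpa : IsPartialAffine IB ParB B) {m : L}
    (hm : Sum.inr m ∈ B) (hfree : Hyperfree IB ParB B (Sum.inr m)) (hDfin : D.Finite)
    (hDpa : IsPartialAffine ID ParD D)
    (hf : IsStrongEmbedding IB ParB (B \ {Sum.inr m}) ID ParD D fp fl) {p₁ p₂ : P}
    (hp₁ : p₁ ∈ pointsOn IB B m) (hp₂ : p₂ ∈ pointsOn IB B m) (hne : p₁ ≠ p₂) {n : L'}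
    (hn : Sum.inr n ∈ D) (hn₁ : ID (fp p₁) n) (hn₂ : ID (fp p₂) n) :
    ExtendsStrongly IB ParB (B \ {Sum.inr m}) B ID ParD D fp fl := by
  set F := Sum.map fp fl '' (B \ {Sum.inr m})
  have hptB : ∀ p, Sum.inl p ∈ B → Sum.inl p ∈ B \ {Sum.inr m} := fun p hp => ⟨hp, by simp⟩
  have hfpF : ∀ p, Sum.inl p ∈ B → Sum.inl (fp p) ∈ F := fun p hp => ⟨_, hptB p hp, rfl⟩
  have hfp_ne : fp p₁ ≠ fp p₂ := fun h => hne (hf.fp_inj (hptB p₁ hp₁.1) (hptB p₂ hp₂.1) h)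
  have hnF : Sum.inr n ∉ F := by
    intro h
    obtain ⟨l, hl, rfl⟩ := mem_image_map_inr.mp h
    exact hl.2 (congrArg _ (hBpa.eq_of_inc_inc hne hp₁.1 hp₂.1 hl.1 hm
      ((hf.incid_iff p₁ l (hptB p₁ hp₁.1) hl).mp hn₁)
      ((hf.incid_iff p₂ l (hptB p₂ hp₂.1) hl).mp hn₂) hp₁.2 hp₂.2))
  have hthird : ∀ X, F ⊆ X → Hyperfree ID ParD X (Sum.inr n) → ∀ a, Sum.inl a ∈ X →
      ID a n → a = fp p₁ ∨ a = fp p₂ := fun X hFX h a ha han =>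
    eq_or_eq_of_encard_le_two h.pointsOn_encard_le_two ⟨hFX (hfpF p₁ hp₁.1), hn₁⟩
      ⟨hFX (hfpF p₂ hp₂.1), hn₂⟩ ⟨ha, han⟩ hfp_ne
  have hnopar : ∀ X, F ⊆ X → Hyperfree ID ParD X (Sum.inr n) → ∀ a, Sum.inr a ∈ X →
      a ≠ n → ¬ ParD n a := fun X hFX h a ha hne' =>
    h.not_par ⟨hFX (hfpF p₁ hp₁.1), hn₁⟩ ⟨hFX (hfpF p₂ hp₂.1), hn₂⟩ hfp_ne ha hne'
  obtain ⟨-, rfl, hnfree⟩ := hf.openOver_image {Sum.inr n}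
    (Set.singleton_subset_iff.mpr ⟨hn, hnF⟩) (Set.finite_singleton _) (Set.singleton_nonempty _)
  refine extendsStrongly_update_inr IsOpenExtension.refl hDfin hDpa hBpa hm hf hn hnF
    (fun p hp => ⟨fun h => ?_, fun h => ?_⟩) (fun l hl hlm => ?_) (fun S hS a ha hn' han => ?_)
    fun S hS a ha han hpar _ hn' => ?_
  · rcases hthird _ Set.subset_union_left hnfree (fp p) (Or.inl (hfpF p hp)) h with h | h
    · exact hf.fp_inj (hptB p hp) (hptB p₁ hp₁.1) h ▸ hp₁.2
    · exact hf.fp_inj (hptB p hp) (hptB p₂ hp₂.1) h ▸ hp₂.2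
  · rcases eq_or_eq_of_encard_le_two hfree.pointsOn_encard_le_two hp₁ hp₂ ⟨hp, h⟩ hne
      with rfl | rfl
    exacts [hn₁, hn₂]
  · have hlB : Sum.inr l ∈ B \ {Sum.inr m} := ⟨hl, by simpa using hlm⟩
    exact iff_of_false
      (hnopar _ Set.subset_union_left hnfree (fl l) (Or.inl ⟨_, hlB, rfl⟩)
        fun h => hnF (h ▸ ⟨_, hlB, rfl⟩))
      (hfree.not_par hp₁ hp₂ hne hl hlm)
  · rcases hthird _ (fun z hz => Or.inr (Or.inl hz)) hn' a (Or.inr (Or.inr ha)) han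
      with rfl | rfl
    exacts [(hS ha).2 (Or.inr (hfpF p₁ hp₁.1)), (hS ha).2 (Or.inr (hfpF p₂ hp₂.1))]
  · exact absurd (hDpa.par_symm (hS ha).1 hn hpar)
      (hnopar _ (fun z hz => Or.inr (Or.inl hz)) hn' a (Or.inr (Or.inr ha)) han)

lemma extendsStrongly_line_of_parallel (hBpa : IsPartialAffine IB ParB B) {m : L}
    (hm : Sum.inr m ∈ B) (hfree : Hyperfree IB ParB B (Sum.inr m)) (hDfin : D.Finite)
    (hDpa : IsPartialAffine ID ParD D)
    (hf : IsStrongEmbedding IB ParB (B \ {Sum.inr m}) ID ParD D fp fl) {p : P}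
    (hp : p ∈ pointsOn IB B m) {l₀ : L} (hl₀ : Sum.inr l₀ ∈ B) (hl₀m : l₀ ≠ m)
    (hml₀ : ParB m l₀) {n : L'} (hn : Sum.inr n ∈ D) (hpn : ID (fp p) n)
    (hnl₀ : ParD n (fl l₀)) :
    ExtendsStrongly IB ParB (B \ {Sum.inr m}) B ID ParD D fp fl := by
  set F := Sum.map fp fl '' (B \ {Sum.inr m})
  have hptB : ∀ p, Sum.inl p ∈ B → Sum.inl p ∈ B \ {Sum.inr m} := fun p hp => ⟨hp, by simp⟩
  have hlineB : ∀ l, Sum.inr l ∈ B → l ≠ m → Sum.inr l ∈ B \ {Sum.inr m} :=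
    fun l hl hlm => ⟨hl, by simpa using hlm⟩
  have hfpF : ∀ p, Sum.inl p ∈ B → Sum.inl (fp p) ∈ F := fun p hp => ⟨_, hptB p hp, rfl⟩
  have hl₀F : Sum.inr (fl l₀) ∈ F := ⟨_, hlineB l₀ hl₀ hl₀m, rfl⟩
  have hl₀D : Sum.inr (fl l₀) ∈ D := hf.mapsTo.image_subset hl₀F
  have hnF : Sum.inr n ∉ F := by
    intro h
    obtain ⟨l, hl, rfl⟩ := mem_image_map_inr.mp h
    refine hl.2 (congrArg _ (hBpa.eq_of_par_of_inc hp.1 hl₀ hl.1 hm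
      ((hf.incid_iff p l (hptB p hp.1) hl).mp hpn) ?_ hp.2 hml₀))
    exact (hf.par_iff l l₀ hl (hlineB l₀ hl₀ hl₀m)).mp hnl₀
  have hunique : ∀ X, F ⊆ X → Hyperfree ID ParD X (Sum.inr n) →
      (pointsOn ID X n).encard ≤ 1 := fun X hFX h =>
    h.encard_pointsOn_le_one_of_par (hFX hl₀F) (fun h => hnF (h ▸ hl₀F)) hnl₀
  obtain ⟨-, rfl, hnfree⟩ := hf.openOver_image {Sum.inr n}
    (Set.singleton_subset_iff.mpr ⟨hn, hnF⟩) (Set.finite_singleton _) (Set.singleton_nonempty _)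
  refine extendsStrongly_update_inr IsOpenExtension.refl hDfin hDpa hBpa hm hf hn hnF
    (fun p' hp' => ⟨fun h => ?_, fun h => ?_⟩) (fun l hl hlm => ?_)
    (fun S hS a ha hn' han => ?_) fun S hS a ha han hpar hfe _ => ?_
  · have := Set.encard_le_one_iff.mp (hunique _ Set.subset_union_left hnfree) _ _
      ⟨Or.inl (hfpF p' hp'), h⟩ ⟨Or.inl (hfpF p hp.1), hpn⟩
    exact hf.fp_inj (hptB p' hp') (hptB p hp.1) this ▸ hp.2
  · exact Set.encard_le_one_iff.mp (hfree.encard_pointsOn_le_one_of_par hl₀ hl₀m hml₀) _ _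
      ⟨hp', h⟩ hp ▸ hpn
  · rw [hDpa.par_congr_left hn hl₀D (hf.mapsTo (hlineB l hl hlm)) hnl₀,
      hf.par_iff l₀ l (hlineB l₀ hl₀ hl₀m) (hlineB l hl hlm), hBpa.par_congr_left hm hl₀ hl hml₀]
  · have := Set.encard_le_one_iff.mp (hunique _ (fun z hz => Or.inr (Or.inl hz)) hn') _ _
      ⟨Or.inr (Or.inr ha), han⟩ ⟨Or.inr (Or.inl (hfpF p hp.1)), hpn⟩
    exact (hS ha).2 (Or.inr (this ▸ hfpF p hp.1))
  · refine hfe.encard_pointsOn_le_one_of_par (Or.inl hl₀F)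
      (fun h => (hS ha).2 (Or.inr (h ▸ hl₀F))) ?_
    exact (hDpa.par_congr_left (hS ha).1 hn hl₀D hpar).mpr hnl₀

/-- The parallel class that a fresh image of `m` has to join. -/
def parallelsOfImage (ParB : L → L → Prop) (B : Set (P ⊕ L)) (m : L) (ParD : L' → L' → Prop)
    (fl : L → L') (a : L') : Prop :=
  ∃ l₀, Sum.inr l₀ ∈ B ∧ l₀ ≠ m ∧ ParB m l₀ ∧ ParD (fl l₀) a

lemma parallelsOfImage_iff (hBpa : IsPartialAffine IB ParB B) (hDpa : IsPartialAffine ID ParD D)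
    {m : L} (hm : Sum.inr m ∈ B) (hf : IsEmbedding IB ParB (B \ {Sum.inr m}) ID ParD D fp fl)
    {a a' : L'} (ha : Sum.inr a ∈ D) (ha' : Sum.inr a' ∈ D)
    (h : parallelsOfImage ParB B m ParD fl a) :
    parallelsOfImage ParB B m ParD fl a' ↔ ParD a a' := by
  obtain ⟨l₀, hl₀, hl₀m, hml₀, h₀⟩ := h
  have hl₀B : Sum.inr l₀ ∈ B \ {Sum.inr m} := ⟨hl₀, by simpa using hl₀m⟩
  rw [← hDpa.par_congr_left (hf.mapsTo hl₀B) ha ha' h₀]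
  refine ⟨fun ⟨l₁, hl₁, hl₁m, hml₁, h₁⟩ => ?_, fun h => ⟨l₀, hl₀, hl₀m, hml₀, h⟩⟩
  have hl₁B : Sum.inr l₁ ∈ B \ {Sum.inr m} := ⟨hl₁, by simpa using hl₁m⟩
  refine (hDpa.par_congr_left (hf.mapsTo hl₀B) (hf.mapsTo hl₁B) ha' ?_).mpr h₁
  rwa [hf.par_iff l₀ l₁ hl₀B hl₁B, ← hBpa.par_congr_left hm hl₀ hl₁ hml₀]

lemma parallelsOfImage_image_iff (hBpa : IsPartialAffine IB ParB B)
    (hDpa : IsPartialAffine ID ParD D) {m : L} (hm : Sum.inr m ∈ B)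
    (hf : IsEmbedding IB ParB (B \ {Sum.inr m}) ID ParD D fp fl) {l : L} (hl : Sum.inr l ∈ B)
    (hlm : l ≠ m) : parallelsOfImage ParB B m ParD fl (fl l) ↔ ParB m l := by
  have hlB : Sum.inr l ∈ B \ {Sum.inr m} := ⟨hl, by simpa using hlm⟩
  refine ⟨fun ⟨l₀, hl₀, hl₀m, hml₀, h₀⟩ => ?_,
    fun h => ⟨l, hl, hlm, h, hDpa.par_refl (hf.mapsTo hlB)⟩⟩
  rw [hf.par_iff l₀ l ⟨hl₀, by simpa using hl₀m⟩ hlB] at h₀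
  exact (hBpa.par_congr_left hm hl₀ hl hml₀).mpr h₀

lemma extendsStrongly_line_of_not_forced [Infinite L'] (hBpa : IsPartialAffine IB ParB B)
    {m : L} (hm : Sum.inr m ∈ B) (hfree : Hyperfree IB ParB B (Sum.inr m)) (hDfin : D.Finite)
    (hDpa : IsPartialAffine ID ParD D)
    (hf : IsStrongEmbedding IB ParB (B \ {Sum.inr m}) ID ParD D fp fl)
    (htwo : ¬ ∃ n, Sum.inr n ∈ D ∧ ∃ p₁ ∈ pointsOn IB B m, ∃ p₂ ∈ pointsOn IB B m,
      p₁ ≠ p₂ ∧ ID (fp p₁) n ∧ ID (fp p₂) n)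
    (hparallel : ¬ ∃ n, Sum.inr n ∈ D ∧ ∃ p ∈ pointsOn IB B m, ∃ l₀, Sum.inr l₀ ∈ B ∧
      l₀ ≠ m ∧ ParB m l₀ ∧ ID (fp p) n ∧ ParD n (fl l₀)) :
    ExtendsStrongly IB ParB (B \ {Sum.inr m}) B ID ParD D fp fl := by
  obtain ⟨y, hy⟩ : ∃ y, Sum.inr y ∉ D :=
    (hDfin.preimage Sum.inr_injective.injOn).exists_notMem
  have hptB : ∀ p, Sum.inl p ∈ B → Sum.inl p ∈ B \ {Sum.inr m} := fun p hp => ⟨hp, by simp⟩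
  have hlD : ∀ l, Sum.inr l ∈ B → l ≠ m → Sum.inr (fl l) ∈ D := fun l hl hlm =>
    hf.mapsTo ⟨hl, by simpa using hlm⟩
  have hne_y : ∀ l, Sum.inr l ∈ B → l ≠ m → fl l ≠ y := fun l hl hlm h =>
    hy (h ▸ hlD l hl hlm)
  set Q := fp '' pointsOn IB B m
  set π := parallelsOfImage ParB B m ParD fl
  have hQ : Q.encard ≤ 1 ∨ (Q.encard ≤ 2 ∧ ∀ a, Sum.inr a ∈ D → ¬ π a) := by
    rcases hfree with h | ⟨h, hno⟩
    · exact Or.inl ((Set.encard_image_le _ _).trans h)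
    · exact Or.inr ⟨(Set.encard_image_le _ _).trans h.le,
        fun a _ ⟨l₀, hl₀, hl₀m, hml₀, _⟩ => hno l₀ hl₀ hl₀m hml₀⟩
  have hext : IsOpenExtension ID ParD D (adjoinLineIncid ID y Q) (adjoinLinePar ParD y π)
      (insert (Sum.inr y) D) := isOpenExtension_adjoinLine hy hQ
  have hpa : IsPartialAffine (adjoinLineIncid ID y Q) (adjoinLinePar ParD y π)
      (insert (Sum.inr y) D) := by
    refine hDpa.adjoinLine hy
      (fun a a' ha ha' => parallelsOfImage_iff hBpa hDpa hm hf.toIsEmbedding ha ha') ?_ ?_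
    · rintro a ha _ _ ⟨p₁, hp₁, rfl⟩ ⟨p₂, hp₂, rfl⟩ h₁ h₂
      by_contra hne
      exact htwo ⟨a, ha, p₁, hp₁, p₂, hp₂, fun h => hne (h ▸ rfl), h₁, h₂⟩
    · rintro _ ⟨p, hp, rfl⟩ a ha hpa ⟨l₀, hl₀, hl₀m, hml₀, h₀⟩
      exact hparallel ⟨a, ha, p, hp, l₀, hl₀, hl₀m, hml₀, hpa,
        hDpa.par_symm (hlD l₀ hl₀ hl₀m) ha h₀⟩
  refine extendsStrongly_update_inr hext (hDfin.insert _) hpa hBpa hm (hext.isStrongEmbedding hf)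
    (Set.mem_insert _ _) (fun h => hy (hf.mapsTo.image_subset h)) (fun p hp => ?_)
    (fun l hl hlm => ?_) (fun S hS a ha _ hay => ?_) fun S hS a ha hay hpar hfe _ => ?_
  · rw [adjoinLineIncid_self]
    exact ⟨fun ⟨p', hp', h⟩ => hf.fp_inj (hptB p' hp'.1) (hptB p hp) h ▸ hp'.2,
      fun h => ⟨p, ⟨hp, h⟩, rfl⟩⟩
  · rw [adjoinLinePar_self_left (hne_y l hl hlm)]
    exact parallelsOfImage_image_iff hBpa hDpa hm hf.toIsEmbedding hl hlm
  · obtain ⟨p, hp, rfl⟩ := adjoinLineIncid_self.mp hay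
    exact (hS ha).2 (Or.inr ⟨_, hptB p hp.1, rfl⟩)
  · obtain ⟨l₀, hl₀, hl₀m, -, h₀⟩ := (adjoinLinePar_self_right hay).mp hpar
    have hl₀F : Sum.inr (fl l₀) ∈ Sum.map fp fl '' (B \ {Sum.inr m}) :=
      ⟨_, ⟨hl₀, by simpa using hl₀m⟩, rfl⟩
    refine hfe.encard_pointsOn_le_one_of_par (Or.inl hl₀F)
      (fun h => (hS ha).2 (Or.inr (h ▸ hl₀F))) ?_
    rw [adjoinLinePar_of_ne hay (hne_y l₀ hl₀ hl₀m)]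
    exact hDpa.par_symm (hlD l₀ hl₀ hl₀m) (by simpa [hay] using (hS ha).1) h₀

lemma extendsStrongly_line [Infinite L'] (hBpa : IsPartialAffine IB ParB B) {m : L}
    (hm : Sum.inr m ∈ B) (hfree : Hyperfree IB ParB B (Sum.inr m)) (hDfin : D.Finite)
    (hDpa : IsPartialAffine ID ParD D)
    (hf : IsStrongEmbedding IB ParB (B \ {Sum.inr m}) ID ParD D fp fl) :
    ExtendsStrongly IB ParB (B \ {Sum.inr m}) B ID ParD D fp fl := by
  by_cases htwo : ∃ n, Sum.inr n ∈ D ∧ ∃ p₁ ∈ pointsOn IB B m, ∃ p₂ ∈ pointsOn IB B m,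
      p₁ ≠ p₂ ∧ ID (fp p₁) n ∧ ID (fp p₂) n
  · obtain ⟨n, hn, p₁, hp₁, p₂, hp₂, hne, hn₁, hn₂⟩ := htwo
    exact extendsStrongly_line_of_two_points hBpa hm hfree hDfin hDpa hf hp₁ hp₂ hne hn hn₁ hn₂
  by_cases hparallel : ∃ n, Sum.inr n ∈ D ∧ ∃ p ∈ pointsOn IB B m, ∃ l₀, Sum.inr l₀ ∈ B ∧
      l₀ ≠ m ∧ ParB m l₀ ∧ ID (fp p) n ∧ ParD n (fl l₀)
  · obtain ⟨n, hn, p, hp, l₀, hl₀, hl₀m, hml₀, hpn, hnl₀⟩ := hparallel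
    exact extendsStrongly_line_of_parallel hBpa hm hfree hDfin hDpa hf hp hl₀ hl₀m hml₀ hn hpn
      hnl₀
  exact extendsStrongly_line_of_not_forced hBpa hm hfree hDfin hDpa hf htwo hparallel

lemma ExtendsStrongly.trans {B₀ B₁ B₂ : Set (P ⊕ L)}
    (h : ExtendsStrongly IB ParB B₀ B₁ ID ParD D fp fl) (hB : B₀ ⊆ B₁)
    (h' : ∀ (ID₁ : P' → L' → Prop) (ParD₁ : L' → L' → Prop) (D₁ : Set (P' ⊕ L'))
      (fp₁ : P → P') (fl₁ : L → L'), D₁.Finite → IsPartialAffine ID₁ ParD₁ D₁ →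
      IsStrongEmbedding IB ParB B₁ ID₁ ParD₁ D₁ fp₁ fl₁ →
      ExtendsStrongly IB ParB B₁ B₂ ID₁ ParD₁ D₁ fp₁ fl₁) :
    ExtendsStrongly IB ParB B₀ B₂ ID ParD D fp fl := by
  obtain ⟨ID₁, ParD₁, D₁, fp₁, fl₁, hext₁, hfin₁, hpa₁, hf₁, heq₁⟩ := h
  obtain ⟨ID₂, ParD₂, D₂, fp₂, fl₂, hext₂, hfin₂, hpa₂, hf₂, heq₂⟩ :=
    h' ID₁ ParD₁ D₁ fp₁ fl₁ hfin₁ hpa₁ hf₁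
  exact ⟨ID₂, ParD₂, D₂, fp₂, fl₂, hext₁.trans hext₂, hfin₂, hpa₂, hf₂,
    (heq₂.mono hB).trans heq₁⟩

lemma extendsStrongly_insert [Infinite P'] [Infinite L'] (hBpa : IsPartialAffine IB ParB B)
    {b : P ⊕ L} (hb : b ∈ B) (hfree : Hyperfree IB ParB B b) (hDfin : D.Finite)
    (hDpa : IsPartialAffine ID ParD D)
    (hf : IsStrongEmbedding IB ParB (B \ {b}) ID ParD D fp fl) :
    ExtendsStrongly IB ParB (B \ {b}) B ID ParD D fp fl := by
  rcases b with q | m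
  · exact extendsStrongly_point hBpa hb hfree hDfin hDpa hf
  · exact extendsStrongly_line hBpa hb hfree hDfin hDpa hf

theorem IsStrongEmbedding.extendsStrongly [Infinite P'] [Infinite L'] {A : Set (P ⊕ L)}
    (hBfin : B.Finite) (hBpa : IsPartialAffine IB ParB B) (hAB : A ⊆ B)
    (hopen : OpenOver IB ParB A B) (hDfin : D.Finite) (hDpa : IsPartialAffine ID ParD D)
    (hf : IsStrongEmbedding IB ParB A ID ParD D fp fl) :
    ExtendsStrongly IB ParB A B ID ParD D fp fl := by
  induction hn : (B \ A).ncard generalizing B with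
  | zero =>
    obtain rfl : B = A :=
      (Set.sdiff_eq_empty.mp ((Set.ncard_eq_zero hBfin.sdiff).mp hn)).antisymm hAB
    exact ⟨ID, ParD, D, fp, fl, IsOpenExtension.refl, hDfin, hDpa, hf, Set.eqOn_refl _ _⟩
  | succ n ih =>
    obtain ⟨b, ⟨hbB, hbA⟩, hfree⟩ := hopen (B \ A) subset_rfl hBfin.sdiff
      (Set.nonempty_of_ncard_ne_zero (by omega))
    rw [Set.union_sdiff_cancel hAB] at hfree
    have hAB' : A ⊆ B \ {b} := fun x hx => ⟨hAB hx, fun h => hbA (h ▸ hx)⟩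
    have hn' : ((B \ {b}) \ A).ncard = n := by
      rw [Set.sdiff_sdiff_comm, Set.ncard_sdiff_singleton_of_mem (s := B \ A) ⟨hbB, hbA⟩, hn]
      rfl
    exact (ih hBfin.sdiff (hBpa.mono Set.sdiff_subset) hAB' (hopen.mono Set.sdiff_subset) hn').trans
      hAB' fun _ _ _ _ _ hfin hpa hf => extendsStrongly_insert hBpa hbB hfree hfin hpa hf

end Step

end Affine

theorem stmt16_general {P L : Type}
    (IB IC : P → L → Prop) (ParB ParC : L → L → Prop) (B C : Set (P ⊕ L))
    (hBfin : B.Finite) (hCfin : C.Finite)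
    (hBpartial : IsPartialAffine IB ParB B) (hCpartial : IsPartialAffine IC ParC C)
    (hCopen : IsOpen IC ParC C)
    -- the intersection A = B ∩ C is a common substructure:
    (hagreeI : ∀ (p : P) (l : L), Sum.inl p ∈ B ∩ C → Sum.inr l ∈ B ∩ C →
      (IB p l ↔ IC p l))
    (hagreePar : ∀ l l' : L, Sum.inr l ∈ B ∩ C → Sum.inr l' ∈ B ∩ C →
      (ParB l l' ↔ ParC l l'))
    (hAB : OpenOver IB ParB (B ∩ C) B) (hAC : OpenOver IC ParC (B ∩ C) C) :
    ∃ (P' L' : Type) (ID : P' → L' → Prop) (ParD : L' → L' → Prop) (D : Set (P' ⊕ L'))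
      (fp gp : P → P') (fl gl : L → L'),
      D.Finite ∧ IsPartialAffine ID ParD D ∧ IsOpen ID ParD D ∧
      Set.MapsTo (Sum.map fp fl) B D ∧ Set.MapsTo (Sum.map gp gl) C D ∧
      Set.InjOn (Sum.map fp fl) B ∧ Set.InjOn (Sum.map gp gl) C ∧
      (∀ (p : P) (l : L), Sum.inl p ∈ B → Sum.inr l ∈ B → (ID (fp p) (fl l) ↔ IB p l)) ∧
      (∀ l l' : L, Sum.inr l ∈ B → Sum.inr l' ∈ B → (ParD (fl l) (fl l') ↔ ParB l l')) ∧
      (∀ (p : P) (l : L), Sum.inl p ∈ C → Sum.inr l ∈ C → (ID (gp p) (gl l) ↔ IC p l)) ∧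
      (∀ l l' : L, Sum.inr l ∈ C → Sum.inr l' ∈ C → (ParD (gl l) (gl l') ↔ ParC l l')) ∧
      (∀ x ∈ B ∩ C, Sum.map fp fl x = Sum.map gp gl x) ∧
      OpenOver ID ParD (Sum.map fp fl '' B) D ∧
      OpenOver ID ParD (Sum.map gp gl '' C) D := by
  -- start from a copy of `C` inside types with room for fresh points and lines
  have hg := isEmbedding_relationMap (Sum.inl_injective : Function.Injective
    (Sum.inl : P → P ⊕ ℕ)) (Sum.inl_injective : Function.Injective (Sum.inl : L → L ⊕ ℕ))
    IC ParC C
  have hgA : IsStrongEmbedding IB ParB (B ∩ C) _ _ _ Sum.inl Sum.inl :=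
    ⟨(hg.mono Set.inter_subset_right).of_agreeOn_source ⟨hagreeI, hagreePar⟩,
      hg.openOver_image Set.inter_subset_right hAC⟩
  obtain ⟨ID, ParD, D, fp, fl, hext, hDfin, hDpa, hf, heq⟩ :=
    hgA.extendsStrongly hBfin hBpartial Set.inter_subset_left hAB (hCfin.image _)
      (hg.isPartialAffine_image hCpartial)
  have hg' := hg.of_agreeOn hext.agreeOn hext.subset
  exact ⟨P ⊕ ℕ, L ⊕ ℕ, ID, ParD, D, fp, Sum.inl, fl, Sum.inl, hDfin, hDpa,
    hext.isOpen (hg.isOpen_image hCopen), hf.mapsTo, hg'.mapsTo, hf.injOn, hg'.injOn,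
    hf.incid_iff, hf.par_iff, hg'.incid_iff, hg'.par_iff, fun _ hx => heq hx,
    hf.openOver_image, hext.openOver⟩

theorem stmt16 {P L : Type}
    (IB IC : P → L → Prop) (ParB ParC : L → L → Prop) (B C : Set (P ⊕ L))
    (hBfin : B.Finite) (hCfin : C.Finite)
    (hBpartial : IsPartialAffine IB ParB B) (hCpartial : IsPartialAffine IC ParC C)
    (hBopen : IsOpen IB ParB B) (hCopen : IsOpen IC ParC C)
    -- the intersection A = B ∩ C is a common substructure:
    (hagreeI : ∀ (p : P) (l : L), Sum.inl p ∈ B ∩ C → Sum.inr l ∈ B ∩ C →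
      (IB p l ↔ IC p l))
    (hagreePar : ∀ l l' : L, Sum.inr l ∈ B ∩ C → Sum.inr l' ∈ B ∩ C →
      (ParB l l' ↔ ParC l l'))
    (hAB : OpenOver IB ParB (B ∩ C) B) (hAC : OpenOver IC ParC (B ∩ C) C) :
    ∃ (P' L' : Type) (ID : P' → L' → Prop) (ParD : L' → L' → Prop) (D : Set (P' ⊕ L'))
      (fp gp : P → P') (fl gl : L → L'),
      D.Finite ∧ IsPartialAffine ID ParD D ∧ IsOpen ID ParD D ∧
      Set.MapsTo (Sum.map fp fl) B D ∧ Set.MapsTo (Sum.map gp gl) C D ∧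
      Set.InjOn (Sum.map fp fl) B ∧ Set.InjOn (Sum.map gp gl) C ∧
      (∀ (p : P) (l : L), Sum.inl p ∈ B → Sum.inr l ∈ B → (ID (fp p) (fl l) ↔ IB p l)) ∧
      (∀ l l' : L, Sum.inr l ∈ B → Sum.inr l' ∈ B → (ParD (fl l) (fl l') ↔ ParB l l')) ∧
      (∀ (p : P) (l : L), Sum.inl p ∈ C → Sum.inr l ∈ C → (ID (gp p) (gl l) ↔ IC p l)) ∧
      (∀ l l' : L, Sum.inr l ∈ C → Sum.inr l' ∈ C → (ParD (gl l) (gl l') ↔ ParC l l')) ∧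
      (∀ x ∈ B ∩ C, Sum.map fp fl x = Sum.map gp gl x) ∧
      OpenOver ID ParD (Sum.map fp fl '' B) D ∧
      OpenOver ID ParD (Sum.map gp gl '' C) D :=
  stmt16_general IB IC ParB ParC B C hBfin hCfin hBpartial hCpartial hCopen hagreeI hagreePar hAB
    hAC
end

section
/- Let A ⊆ B be finite open partial affine planes such that B is not open over A, i.e. there is a nonempty subset C₀ ⊆ B ∖ A such that no element of C₀ is hyperfree in A ∪ C₀. Then no finite open partial affine plane C containing A contains three subsets B₀, B₁, B₂ such that B_i ∩ B_j = A for all i ≠ j and each B_i is isomorphic to B via an isomorphism fixing A pointwise. That is, every finite open partial affine plane contains at most two copies of B over A that pairwise intersect exactly in A. -/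
open Affine

theorem stmt17 {P L : Type}
    (IB IC : P → L → Prop) (ParB ParC : L → L → Prop)
    (A B : Set (P ⊕ L)) (hAB : A ⊆ B) (hBfin : B.Finite)
    (hBpartial : IsPartialAffine IB ParB B) (hBopen : IsOpen IB ParB B)
    -- B is not open over A, witnessed by C₀:
    (C0 : Set (P ⊕ L)) (hC0 : C0 ⊆ B \ A) (hC0ne : C0.Nonempty)
    (hclosed : ∀ c ∈ C0, ¬ Hyperfree IB ParB (A ∪ C0) c)
    -- C is a finite open partial affine plane containing A:
    (C : Set (P ⊕ L)) (hCfin : C.Finite) (hAC : A ⊆ C)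
    (hCpartial : IsPartialAffine IC ParC C) (hCopen : IsOpen IC ParC C)
    -- containing three copies of B over A pairwise intersecting in A:
    (Bi : Fin 3 → Set (P ⊕ L)) (hBiC : ∀ i, Bi i ⊆ C)
    (hinter : ∀ i j, i ≠ j → Bi i ∩ Bi j = A)
    (hiso : ∀ i, ∃ (fp : P → P) (fl : L → L),
        Set.BijOn (Sum.map fp fl) B (Bi i) ∧
        (∀ x ∈ A, Sum.map fp fl x = x) ∧
        (∀ (p : P) (l : L), Sum.inl p ∈ B → Sum.inr l ∈ B →
          (IC (fp p) (fl l) ↔ IB p l)) ∧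
        (∀ l l' : L, Sum.inr l ∈ B → Sum.inr l' ∈ B →
          (ParC (fl l) (fl l') ↔ ParB l l'))) :
    False := by
  classical
  choose fp fl hbij hfix hinc hpar using hiso
  obtain ⟨hCrefl, hCsymm, hCtrans, -, -, -⟩ := hCpartial
  have hC0B : C0 ⊆ B := fun x hx => ((hC0 hx).1)
  have hACB : A ∪ C0 ⊆ B := Set.union_subset hAB hC0B
  -- fixing A componentwise
  have hfp : ∀ (i : Fin 3) (p : P), Sum.inl p ∈ A → fp i p = p := by
    intro i p hp
    have := hfix i _ hp
    rw [Sum.map_inl] at this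
    exact Sum.inl.inj this
  have hfl : ∀ (i : Fin 3) (l : L), Sum.inr l ∈ A → fl i l = l := by
    intro i l hl
    have := hfix i _ hl
    rw [Sum.map_inr] at this
    exact Sum.inr.inj this
  -- images of C0 avoid A
  have hmemBi : ∀ (i : Fin 3), ∀ x ∈ C0, Sum.map (fp i) (fl i) x ∈ Bi i :=
    fun i x hx => (hbij i).mapsTo (hC0B hx)
  have hnotA : ∀ (i : Fin 3), ∀ x ∈ C0, Sum.map (fp i) (fl i) x ∉ A := by
    intro i x hx hmem
    have hx' : Sum.map (fp i) (fl i) x = x :=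
      (hbij i).injOn (hAB hmem) (hC0B hx) (hfix i _ hmem)
    exact (hC0 hx).2 (hx' ▸ hmem)
  have hdisj : ∀ (i j : Fin 3), i ≠ j → ∀ x ∈ C0, ∀ y ∈ C0,
      Sum.map (fp i) (fl i) x ≠ Sum.map (fp j) (fl j) y := by
    intro i j hij x hx y hy h
    exact hnotA i x hx (by
      rw [← hinter i j hij]
      exact ⟨hmemBi i x hx, h ▸ hmemBi j y hy⟩)
  have hflne : ∀ (i j : Fin 3), i ≠ j → ∀ l : L, Sum.inr l ∈ C0 → fl i l ≠ fl j l := by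
    intro i j hij l hl h
    exact hdisj i j hij _ hl _ hl (by rw [Sum.map_inr, Sum.map_inr, h])
  have hfpne : ∀ (i j : Fin 3), i ≠ j → ∀ p : P, Sum.inl p ∈ C0 → fp i p ≠ fp j p := by
    intro i j hij p hp h
    exact hdisj i j hij _ hp _ hp (by rw [Sum.map_inl, Sum.map_inl, h])
  -- the relevant part of A
  set Astar : Set (P ⊕ L) :=
    {x ∈ A | (∃ (q : P) (m : L), x = Sum.inl q ∧ Sum.inr m ∈ C0 ∧ IB q m) ∨
             (∃ (q : P) (m : L), x = Sum.inr m ∧ Sum.inl q ∈ C0 ∧ IB q m)} with hAstar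
  set Z : Set (P ⊕ L) :=
    (⋃ i : Fin 3, Sum.map (fp i) (fl i) '' C0) ∪ Astar with hZ
  have hZC : Z ⊆ C := by
    intro x hx
    rcases hx with hx | hx
    · simp only [Set.mem_iUnion, Set.mem_image] at hx
      obtain ⟨i, y, hy, rfl⟩ := hx
      exact hBiC i (hmemBi i y hy)
    · exact hAC hx.1
  have hZfin : Z.Finite := hCfin.subset hZC
  have hZne : Z.Nonempty := by
    obtain ⟨x, hx⟩ := hC0ne
    exact ⟨Sum.map (fp 0) (fl 0) x, Or.inl (Set.mem_iUnion.mpr ⟨0, Set.mem_image_of_mem _ hx⟩)⟩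
  -- membership of copies in Z
  have hcopyZ : ∀ (i : Fin 3), ∀ x ∈ C0, Sum.map (fp i) (fl i) x ∈ Z :=
    fun i x hx => Or.inl (Set.mem_iUnion.mpr ⟨i, Set.mem_image_of_mem _ hx⟩)
  obtain ⟨c, hcZ, hchf⟩ := hCopen Z hZC hZfin hZne
  -- key injectivity lemmas
  have hflinj : ∀ i : Fin 3, Set.InjOn (fl i) {l : L | Sum.inr l ∈ B} := by
    intro i l hl l' hl' h
    have := (hbij i).injOn hl hl' (by rw [Sum.map_inr, Sum.map_inr, h])
    exact Sum.inr.inj this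
  have hfpinj : ∀ i : Fin 3, Set.InjOn (fp i) {p : P | Sum.inl p ∈ B} := by
    intro i p hp p' hp' h
    have := (hbij i).injOn hp hp' (by rw [Sum.map_inl, Sum.map_inl, h])
    exact Sum.inl.inj this
  rcases hcZ with hc | hc
  · -- c is in one of the copies
    simp only [Set.mem_iUnion, Set.mem_image] at hc
    obtain ⟨i, x, hxC0, rfl⟩ := hc
    rcases x with p | l
    · -- a copied point
      rw [Sum.map_inl] at hchf
      simp only [Hyperfree] at hchf
      have hncl := hclosed _ hxC0
      simp only [Hyperfree] at hncl
      apply hncl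
      -- map linesThru IB (A ∪ C0) p into linesThru IC Z (fp i p)
      have hsub : (fl i) '' (linesThru IB (A ∪ C0) p) ⊆ linesThru IC Z (fp i p) := by
        rintro - ⟨m, ⟨hmU, hIm⟩, rfl⟩
        have hmB : Sum.inr m ∈ B := hACB hmU
        have hIC : IC (fp i p) (fl i m) := (hinc i p m (hC0B hxC0) hmB).mpr hIm
        rcases hmU with hmA | hmC0
        · refine ⟨?_, hIC⟩
          rw [hfl i m hmA]
          exact Or.inr ⟨hmA, Or.inr ⟨p, m, rfl, hxC0, hIm⟩⟩
        · exact ⟨by rw [← Sum.map_inr (f := fp i)]; exact hcopyZ i _ hmC0, hIC⟩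
      have hinjon : Set.InjOn (fl i) (linesThru IB (A ∪ C0) p) :=
        (hflinj i).mono (fun m hm => hACB hm.1)
      calc (linesThru IB (A ∪ C0) p).encard
          = ((fl i) '' (linesThru IB (A ∪ C0) p)).encard := (hinjon.encard_image).symm
        _ ≤ (linesThru IC Z (fp i p)).encard := Set.encard_le_encard hsub
        _ ≤ 2 := hchf
    · -- a copied line
      rw [Sum.map_inr] at hchf
      simp only [Hyperfree] at hchf
      have hncl := hclosed _ hxC0
      simp only [Hyperfree] at hncl
      push_neg at hncl
      obtain ⟨hB1, hB2⟩ := hncl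
      have hsub : (fp i) '' (pointsOn IB (A ∪ C0) l) ⊆ pointsOn IC Z (fl i l) := by
        rintro - ⟨q, ⟨hqU, hIq⟩, rfl⟩
        have hqB : Sum.inl q ∈ B := hACB hqU
        have hIC : IC (fp i q) (fl i l) := (hinc i q l hqB (hC0B hxC0)).mpr hIq
        rcases hqU with hqA | hqC0
        · refine ⟨?_, hIC⟩
          rw [hfp i q hqA]
          exact Or.inr ⟨hqA, Or.inl ⟨q, l, rfl, hxC0, hIq⟩⟩
        · exact ⟨by rw [← Sum.map_inl (g := fl i)]; exact hcopyZ i _ hqC0, hIC⟩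
      have hinjon : Set.InjOn (fp i) (pointsOn IB (A ∪ C0) l) :=
        (hfpinj i).mono (fun q hq => hACB hq.1)
      have hle : (pointsOn IB (A ∪ C0) l).encard ≤ (pointsOn IC Z (fl i l)).encard := by
        calc (pointsOn IB (A ∪ C0) l).encard
            = ((fp i) '' (pointsOn IB (A ∪ C0) l)).encard := (hinjon.encard_image).symm
          _ ≤ (pointsOn IC Z (fl i l)).encard := Set.encard_le_encard hsub
      rcases hchf with h1 | ⟨h2, hnopar⟩
      · exact absurd (hle.trans h1) hB1.not_ge
      · -- the copied line has exactly two points in Z, find a parallel partner in Z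
        have hBle2 : (pointsOn IB (A ∪ C0) l).encard ≤ 2 := hle.trans_eq h2
        have hB2' : (pointsOn IB (A ∪ C0) l).encard = 2 := by
          refine le_antisymm hBle2 ?_
          have h1lt : (1 : ℕ∞) < (pointsOn IB (A ∪ C0) l).encard := hB1
          have := (ENat.add_one_le_iff (n := (pointsOn IB (A ∪ C0) l).encard)
            (by norm_num : (1:ℕ∞) ≠ ⊤)).mpr h1lt
          norm_num at this
          exact this
        obtain ⟨l', hl'U, hl'ne, hl'par⟩ := hB2 hB2'
        -- produce a parallel partner of fl i l inside Z
        rcases hl'U with hl'A | hl'C0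
        · -- partner in A: use another copy of l itself
          set j : Fin 3 := if i = 0 then 1 else 0 with hj
          have hij : i ≠ j := by
            rcases i with ⟨iv, hiv⟩
            simp only [hj]
            split_ifs with h
            · simp [h]
            · intro he
              rw [he] at h
              exact h rfl
          have hl'B : Sum.inr l' ∈ B := hAB hl'A
          have hlB : Sum.inr l ∈ B := hC0B hxC0
          have hpi : ParC (fl i l) l' := by
            have := (hpar i l l' hlB hl'B).mpr hl'par
            rwa [hfl i l' hl'A] at this
          have hpj : ParC (fl j l) l' := by
            have := (hpar j l l' hlB hl'B).mpr hl'par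
            rwa [hfl j l' hl'A] at this
          have hliC : Sum.inr (fl i l) ∈ C := by
            have := hBiC i (hmemBi i _ hxC0)
            rwa [Sum.map_inr] at this
          have hljC : Sum.inr (fl j l) ∈ C := by
            have := hBiC j (hmemBi j _ hxC0)
            rwa [Sum.map_inr] at this
          have hl'C : Sum.inr l' ∈ C := hAC hl'A
          have hparij : ParC (fl i l) (fl j l) :=
            hCtrans _ _ _ hliC hl'C hljC hpi (hCsymm _ _ hljC hl'C hpj)
          refine hnopar (fl j l) ?_ (Ne.symm (hflne i j hij l hxC0)) hparij
          rw [← Sum.map_inr (f := fp j)]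
          exact hcopyZ j _ hxC0
        · -- partner in C0: use its copy
          have hparC : ParC (fl i l) (fl i l') :=
            (hpar i l l' (hC0B hxC0) (hC0B hl'C0)).mpr hl'par
          have hne : fl i l' ≠ fl i l := by
            intro h
            exact hl'ne ((hflinj i) (hC0B hl'C0) (hC0B hxC0) h)
          refine hnopar (fl i l') ?_ hne hparC
          rw [← Sum.map_inr (f := fp i)]
          exact hcopyZ i _ hl'C0
  · -- c is in Astar: it is triply supported
    obtain ⟨hcA, hw⟩ := hc
    rcases hw with ⟨q, m, rfl, hmC0, hIqm⟩ | ⟨q, m, rfl, hqC0, hIqm⟩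
    · -- a point of A on a copied line
      simp only [Hyperfree] at hchf
      have hqB : Sum.inl q ∈ B := hAB hcA
      have hmB : Sum.inr m ∈ B := hC0B hmC0
      have hmem : ∀ i : Fin 3, fl i m ∈ linesThru IC Z q := by
        intro i
        refine ⟨by rw [← Sum.map_inr (f := fp i)]; exact hcopyZ i _ hmC0, ?_⟩
        have := (hinc i q m hqB hmB).mpr hIqm
        rwa [hfp i q hcA] at this
      have h01 : fl 0 m ≠ fl 1 m := hflne 0 1 (by decide) m hmC0
      have h02 : fl 0 m ≠ fl 2 m := hflne 0 2 (by decide) m hmC0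
      have h12 : fl 1 m ≠ fl 2 m := hflne 1 2 (by decide) m hmC0
      have htr : ({fl 0 m, fl 1 m, fl 2 m} : Set L).encard = 3 := by
        rw [Set.encard_insert_of_notMem (by simp [h01, h02]), Set.encard_pair h12]
        rfl
      have hle3 : (3 : ℕ∞) ≤ (linesThru IC Z q).encard := by
        rw [← htr]
        exact Set.encard_le_encard (by
          intro x hx
          simp only [Set.mem_insert_iff, Set.mem_singleton_iff] at hx
          rcases hx with rfl | rfl | rfl
          · exact hmem 0
          · exact hmem 1
          · exact hmem 2)
      have : (3 : ℕ∞) ≤ 2 := hle3.trans hchf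
      norm_num at this
    · -- a line of A through a copied point
      simp only [Hyperfree] at hchf
      have hqB : Sum.inl q ∈ B := hC0B hqC0
      have hmB : Sum.inr m ∈ B := hAB hcA
      have hmem : ∀ i : Fin 3, fp i q ∈ pointsOn IC Z m := by
        intro i
        refine ⟨by rw [← Sum.map_inl (g := fl i)]; exact hcopyZ i _ hqC0, ?_⟩
        have := (hinc i q m hqB hmB).mpr hIqm
        rwa [hfl i m hcA] at this
      have h01 : fp 0 q ≠ fp 1 q := hfpne 0 1 (by decide) q hqC0
      have h02 : fp 0 q ≠ fp 2 q := hfpne 0 2 (by decide) q hqC0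
      have h12 : fp 1 q ≠ fp 2 q := hfpne 1 2 (by decide) q hqC0
      have htr : ({fp 0 q, fp 1 q, fp 2 q} : Set P).encard = 3 := by
        rw [Set.encard_insert_of_notMem (by simp [h01, h02]), Set.encard_pair h12]
        rfl
      have hle3 : (3 : ℕ∞) ≤ (pointsOn IC Z m).encard := by
        rw [← htr]
        exact Set.encard_le_encard (by
          intro x hx
          simp only [Set.mem_insert_iff, Set.mem_singleton_iff] at hx
          rcases hx with rfl | rfl | rfl
          · exact hmem 0
          · exact hmem 1
          · exact hmem 2)
      rcases hchf with h1 | ⟨h2, -⟩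
      · have : (3 : ℕ∞) ≤ 1 := hle3.trans h1
        norm_num at this
      · rw [h2] at hle3
        norm_num at hle3
end
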